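/- arXiv:1904.04411 — 7 statements merged into one kernel-verified Lean document; each statement's English description precedes it below -/
import Mathlib

section
/- If p is a prime with p ≡ 1 (mod 4), then the fundamental unit ε of the real quadratic field ℚ(√p) has norm -1. -/
/-!
Legendre's argument. Let `(x, y)` be the fundamental solution of `x² - p y² = 1`. Since
`p ≡ 1 (mod 4)`, `x = 2k + 1` is odd and `y = 2z` is even, so `k (k + 1) = p z²` with coprime
factors: one of them is `p a²` and the other `b²`. If `k = p a²`, then `(b, a)` is a smaller
solution of the same equation, which is impossible; so `k = a²`, `k + 1 = p b²`, and
`a² - p b² = -1`. Then `a + b √p` is a unit of norm `-1`. As `N(-1) = 1` in a quadratic field,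
a fundamental unit of norm `1` would force every unit `±εⁿ` to have norm `1`.
-/

open Polynomial IntermediateField Module NumberField

theorem Int.even_of_sq_sub_mul_sq_eq_one {d x y : ℤ} (hd : d % 4 = 1)
    (h : x ^ 2 - d * y ^ 2 = 1) : Even y := by
  by_contra hy
  have hy2 := Int.sq_mod_four_eq_one_of_odd (Int.not_even_iff_odd.mp hy)
  have hdy : d * y ^ 2 % 4 = 1 := by rw [Int.mul_emod, hd, hy2]; rfl
  have hx2 : x ^ 2 % 4 = 0 ∨ x ^ 2 % 4 = 1 := by
    rcases Int.even_or_odd x with ⟨c, rfl⟩ | hx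
    · exact .inl (by rw [show (c + c) ^ 2 = 4 * c ^ 2 by ring]; omega)
    · exact .inr (Int.sq_mod_four_eq_one_of_odd hx)
  generalize x ^ 2 = X at h hx2
  generalize d * y ^ 2 = D at h hdy
  omega

theorem Int.exists_sq_of_isCoprime_of_mul_eq_sq {m n z : ℤ} (h : IsCoprime m n) (hm : 0 ≤ m)
    (hn : 0 ≤ n) (hmn : m * n = z ^ 2) : ∃ a b : ℤ, m = a ^ 2 ∧ n = b ^ 2 := by
  have key {m n : ℤ} (h : IsCoprime m n) (hm : 0 ≤ m) (hmn : m * n = z ^ 2) : ∃ a, m = a ^ 2 := by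
    obtain ⟨a, ha | ha⟩ := Int.sq_of_isCoprime h hmn
    · exact ⟨a, ha⟩
    · exact ⟨0, by nlinarith [sq_nonneg a]⟩
  obtain ⟨a, ha⟩ := key h hm hmn
  obtain ⟨b, hb⟩ := key h.symm hn (by rw [mul_comm, hmn])
  exact ⟨a, b, ha, hb⟩

theorem Int.exists_sq_of_isCoprime_of_mul_eq_prime_mul_sq {p : ℕ} (hp : p.Prime) {m n z : ℤ}
    (h : IsCoprime m n) (hm : 0 ≤ m) (hn : 0 ≤ n) (hmn : m * n = p * z ^ 2) :
    (∃ a b : ℤ, m = p * a ^ 2 ∧ n = b ^ 2) ∨ (∃ a b : ℤ, m = a ^ 2 ∧ n = p * b ^ 2) := by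
  have hp0 : (0 : ℤ) < p := by exact_mod_cast hp.pos
  rcases (Nat.prime_iff_prime_int.mp hp).dvd_mul.mp ⟨z ^ 2, hmn⟩ with ⟨c, rfl⟩ | ⟨c, rfl⟩
  · obtain ⟨a, b, rfl, rfl⟩ := Int.exists_sq_of_isCoprime_of_mul_eq_sq h.of_mul_left_right
      (nonneg_of_mul_nonneg_right hm hp0) hn
      (mul_left_cancel₀ hp0.ne' (by rw [← hmn]; ring))
    exact .inl ⟨a, b, rfl, rfl⟩
  · obtain ⟨a, b, rfl, rfl⟩ := Int.exists_sq_of_isCoprime_of_mul_eq_sq h.of_mul_right_right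
      hm (nonneg_of_mul_nonneg_right hn hp0)
      (mul_left_cancel₀ hp0.ne' (by rw [← hmn]; ring))
    exact .inr ⟨a, b, rfl, rfl⟩

theorem Pell.exists_sq_sub_mul_sq_eq_neg_one_of_prime_of_mod_four_eq_one {p : ℕ} (hp : p.Prime)
    (hp4 : p % 4 = 1) : ∃ a b : ℤ, a ^ 2 - p * b ^ 2 = -1 := by
  have hp0 : (0 : ℤ) < p := by exact_mod_cast hp.pos
  have hnsq : ¬IsSquare (p : ℤ) := by
    rw [Int.isSquare_natCast_iff]
    exact hp.prime.not_isSquare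
  obtain ⟨s, hs⟩ := Pell.IsFundamental.exists_of_not_isSquare hp0 hnsq
  have hpell : s.x ^ 2 - p * s.y ^ 2 = 1 := s.prop
  obtain ⟨z, hz⟩ := Int.even_of_sq_sub_mul_sq_eq_one (by omega) hpell
  obtain ⟨k, hk⟩ : Odd s.x := by
    have : Odd (s.x ^ 2) := ⟨p * 2 * z ^ 2, by rw [hz] at hpell; linear_combination hpell⟩
    exact (Int.odd_pow.mp this).resolve_right two_ne_zero
  have hkk : k * (k + 1) = p * z ^ 2 := by
    rw [hk, hz] at hpell
    exact mul_left_cancel₀ four_ne_zero (by linear_combination hpell)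
  have hx := hs.1
  have hy := hs.2.1
  rcases Int.exists_sq_of_isCoprime_of_mul_eq_prime_mul_sq hp ⟨-1, 1, by ring⟩ (by omega)
    (by omega) hkk with ⟨a, b, hka, hkb⟩ | ⟨a, b, hka, hkb⟩
  · exfalso
    have ha : a ≠ 0 := by rintro rfl; omega
    have hsol : |b| ^ 2 - p * |a| ^ 2 = 1 := by rw [sq_abs, sq_abs]; linarith
    have hle := hs.y_le_y (a := Pell.Solution₁.mk |b| |a| hsol)
      (by rw [Pell.Solution₁.x_mk]; nlinarith [sq_abs b, abs_nonneg b, sq_nonneg a, ha])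
      (by rw [Pell.Solution₁.y_mk]; positivity)
    rw [Pell.Solution₁.y_mk] at hle
    have hzab : z ^ 2 = a ^ 2 * b ^ 2 :=
      mul_left_cancel₀ hp0.ne' (by linear_combination -hkk + (k + 1) * hka + p * a ^ 2 * hkb)
    have hb : 1 ≤ b ^ 2 := by nlinarith [sq_nonneg a]
    nlinarith [sq_abs a, abs_nonneg a, pow_pos (abs_pos.mpr ha) 2]
  · exact ⟨a, b, by linarith⟩

theorem minpoly.eq_of_natDegree_eq_two {F B : Type*} [Field F] [Ring B] [Algebra F B]
    [Nontrivial B] {x : B} (hx : x ∉ (algebraMap F B).range) {q : F[X]} (hq : q.Monic)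
    (hq2 : q.natDegree = 2) (hqx : Polynomial.aeval x q = 0) : minpoly F x = q := by
  have hint : IsIntegral F x := ⟨q, hq, hqx⟩
  refine (eq_of_monic_of_dvd_of_natDegree_le (minpoly.monic hint) hq (minpoly.dvd F x hqx) ?_).symm
  rw [hq2]
  exact (minpoly.two_le_natDegree_iff hint).mpr hx

theorem Algebra.norm_eq_coeff_zero_minpoly_of_finrank_eq_two {F K : Type*} [Field F] [Field K]
    [Algebra F K] (hK : finrank F K = 2) {x : K} (hx : x ∉ (algebraMap F K).range) :
    Algebra.norm F x = (minpoly F x).coeff 0 := by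
  have : FiniteDimensional F K := .of_finrank_pos (by omega)
  have hint : IsIntegral F x := .of_finite F x
  have hdeg : (minpoly F x).natDegree = 2 :=
    le_antisymm (hK ▸ minpoly.natDegree_le x) ((minpoly.two_le_natDegree_iff hint).mpr hx)
  have htop : finrank F⟮x⟯ K = 1 := by
    have := finrank_mul_finrank F F⟮x⟯ K
    rw [adjoin.finrank hint, hdeg, hK] at this
    omega
  have hgen : AdjoinSimple.gen F x = (IntermediateField.adjoin.powerBasis hint).gen := rfl
  rw [Algebra.norm_eq_norm_adjoin, htop, pow_one, hgen, PowerBasis.norm_gen_eq_coeff_zero_minpoly,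
    IntermediateField.adjoin.powerBasis_dim, hdeg, ← hgen, minpoly_gen, neg_one_sq, one_mul]

theorem IntermediateField.finrank_adjoin_of_sq_eq_algebraMap {F L : Type*} [Field F] [Field L]
    [Algebra F L] {x : L} (hx : x ∉ (algebraMap F L).range) {d : F}
    (hxd : x ^ 2 = algebraMap F L d) : finrank F F⟮x⟯ = 2 := by
  have hmonic : (X ^ 2 - C d).Monic := by monicity!
  have hdeg : (X ^ 2 - C d).natDegree = 2 := by compute_degree!
  have hroot : aeval x (X ^ 2 - C d) = 0 := by simp [hxd]
  rw [adjoin.finrank ⟨_, hmonic, hroot⟩, minpoly.eq_of_natDegree_eq_two hx hmonic hdeg hroot, hdeg]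

theorem Algebra.norm_algebraMap_add_algebraMap_mul_of_sq_eq {F K : Type*} [Field F] [Field K]
    [Algebra F K] (hK : finrank F K = 2) {s : K} (hs : s ∉ (algebraMap F K).range) {d : F}
    (hsd : s ^ 2 = algebraMap F K d) (a b : F) :
    Algebra.norm F (algebraMap F K a + algebraMap F K b * s) = a ^ 2 - d * b ^ 2 := by
  rcases eq_or_ne b 0 with rfl | hb
  · simp [Algebra.norm_algebraMap, hK]
  have hx : algebraMap F K a + algebraMap F K b * s ∉ (algebraMap F K).range := by
    rintro ⟨r, hr⟩
    refine hs ⟨(r - a) / b, ?_⟩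
    have hb' : algebraMap F K b ≠ 0 := (_root_.map_ne_zero _).mpr hb
    rw [map_div₀, map_sub, hr]
    field_simp
    ring
  rw [Algebra.norm_eq_coeff_zero_minpoly_of_finrank_eq_two hK hx,
    minpoly.eq_of_natDegree_eq_two hx (q := X ^ 2 - C (2 * a) * X + C (a ^ 2 - d * b ^ 2))
      (by monicity!) (by compute_degree!) ?_]
  · rw [coeff_add, coeff_C_zero]
    simp
  · simp only [map_add, map_sub, map_mul, map_pow, map_ofNat, aeval_X, aeval_C]
    linear_combination (algebraMap F K b) ^ 2 * hsd

theorem MonoidHom.apply_eq_neg_one_of_forall_eq_zpow_or_neg_zpow {R : Type*} [Monoid R]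
    [HasDistribNeg R] (N : R →* ℤ) (hN : N (-1) = 1) {u : Rˣ} (hu : N u = -1) {ε : Rˣ}
    (hε : ∀ v : Rˣ, ∃ n : ℤ, v = ε ^ n ∨ v = -ε ^ n) : N ε = -1 := by
  rcases Int.units_eq_one_or (Units.map N ε) with h | h
  · have hpow (n : ℤ) : N ↑(ε ^ n) = 1 := by
      rw [← Units.coe_map, map_zpow, h, one_zpow, Units.val_one]
    obtain ⟨n, rfl | rfl⟩ := hε u
    · rw [hpow] at hu
      exact absurd hu (by decide)
    · rw [Units.val_neg, ← neg_one_mul, map_mul, hN, hpow] at hu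
      exact absurd hu (by decide)
  · exact congrArg Units.val h

theorem NumberField.RingOfIntegers.norm_neg_one_of_even_finrank {K : Type*} [Field K]
    [NumberField K] (h : Even (finrank ℚ K)) : Algebra.norm ℤ (-1 : 𝓞 K) = 1 := by
  rw [show (-1 : 𝓞 K) = algebraMap ℤ _ (-1) by simp, Algebra.norm_algebraMap,
    RingOfIntegers.rank, h.neg_one_pow]

theorem NumberField.exists_unit_norm_eq_neg_one_of_sq_sub_mul_sq_eq_neg_one {K : Type*} [Field K]
    [NumberField K] (hK : finrank ℚ K = 2) {s : K} (hs : s ∉ (algebraMap ℚ K).range) {d : ℤ}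
    (hsd : s ^ 2 = d) {a b : ℤ} (hab : a ^ 2 - d * b ^ 2 = -1) :
    ∃ u : (𝓞 K)ˣ, Algebra.norm ℤ (u : 𝓞 K) = -1 := by
  let S : 𝓞 K := ⟨s, .of_pow two_pos (hsd ▸ isIntegral_intCast d)⟩
  have hS : S ^ 2 = d := RingOfIntegers.ext (by push_cast; exact hsd)
  have hab' : (a : 𝓞 K) ^ 2 - d * (b : 𝓞 K) ^ 2 = -1 := by exact_mod_cast hab
  refine ⟨Units.mkOfMulEqOne (a + b * S) (b * S - a) ?_, ?_⟩
  · linear_combination (b : 𝓞 K) ^ 2 * hS - hab'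
  have hnorm := Algebra.norm_algebraMap_add_algebraMap_mul_of_sq_eq hK hs (d := d)
    (by rw [hsd, map_intCast]) a b
  have hcoe : ((a + b * S : 𝓞 K) : K) = algebraMap ℚ K a + algebraMap ℚ K b * s := by
    simp [S]
    rfl
  have hab'' : (a : ℚ) ^ 2 - d * (b : ℚ) ^ 2 = -1 := by exact_mod_cast hab
  have := Algebra.coe_norm_int ((a : 𝓞 K) + (b : 𝓞 K) * S)
  rw [hcoe, hnorm, hab''] at this
  rw [Units.val_mkOfMulEqOne]
  exact_mod_cast this

/-- If `p` is a prime with `p ≡ 1 (mod 4)`, then the fundamental unit `ε` of the real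
quadratic field `ℚ(√p)` has norm `-1`. -/
theorem fundamental_unit_norm_neg_one_of_prime_one_mod_four
    (p : ℕ) (hp : p.Prime) (hp4 : p % 4 = 1)
    (K : IntermediateField ℚ ℝ) (hK : K = ℚ⟮(Real.sqrt p)⟯) [NumberField K]
    (ε : (𝓞 K)ˣ)
    (hfund : ∀ u : (𝓞 K)ˣ, ∃ n : ℤ, u = ε ^ n ∨ u = -ε ^ n) :
    Algebra.norm ℤ (ε : 𝓞 K) = -1 := by
  obtain ⟨a, b, hab⟩ := Pell.exists_sq_sub_mul_sq_eq_neg_one_of_prime_of_mod_four_eq_one hp hp4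
  have hirr : √(p : ℝ) ∉ (algebraMap ℚ ℝ).range := hp.irrational_sqrt
  have hsq : √(p : ℝ) ^ 2 = algebraMap ℚ ℝ p := by simp
  have hfin : finrank ℚ K = 2 := hK ▸ finrank_adjoin_of_sq_eq_algebraMap hirr hsq
  let s : K := ⟨√(p : ℝ), hK ▸ mem_adjoin_simple_self ℚ _⟩
  obtain ⟨u, hu⟩ := exists_unit_norm_eq_neg_one_of_sq_sub_mul_sq_eq_neg_one hfin
    (s := s) (fun ⟨r, hr⟩ ↦ hirr ⟨r, congrArg Subtype.val hr⟩) (Subtype.ext (by simp [s])) hab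
  exact (Algebra.norm ℤ).apply_eq_neg_one_of_forall_eq_zpow_or_neg_zpow
    (RingOfIntegers.norm_neg_one_of_even_finrank (hfin ▸ even_two)) hu hfund
end

section
/- Let k = ℚ(√d) be a real quadratic field with fundamental unit ε of norm +1, and m the squarefree part of Norm(ε+1). Then the squarefree part of D/m equals the squarefree part of -Norm(ε-1), where D is the discriminant of k. -/
/-!
Let `t` be the trace of `ε`. As `N ε = 1`, `N(ε + 1) = t + 2` and `-N(ε - 1) = t - 2`, so
`m m' (s s')² = t² - 4`, and `t² - 4` is the discriminant of `(1, ε)`, i.e. `c² D` with `c` the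
index of `ℤ[ε]` in `𝓞 K`. A prime dividing both `m` and `m'` divides `(t + 2) - (t - 2) = 4`.
So either `m m'` is squarefree, and `m m' (s s')² = c² D` forces `D = m m' u²`; or `m = 2a`,
`m' = 2a'` with `a a'` odd and squarefree, `D = a a' u²`, and we still need `u` even, i.e. `D` even.
For this, `(ε + 1)² = N(ε + 1) ε` makes `β = (ε + 1) / s` integral with `β² = m ε ∈ 2 𝓞 K`.
If `D` were odd the trace form would be nondegenerate mod 2, and since `Tr(y)² ≡ Tr(y²) mod 2`
this forces `β ∈ 2 𝓞 K`, hence `4 ∣ N(m ε) = m²`, contradicting `m` squarefree.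
-/

open NumberField IntermediateField

namespace Algebra

variable {R S : Type*} [CommRing R] [CommRing S] [Algebra R S]

section RankTwo

theorem mul_self_eq_trace_smul_sub_norm (b : Module.Basis (Fin 2) R S) (x : S) :
    x * x = trace R S x • x - algebraMap R S (norm R x) := by
  apply leftMulMatrix_injective b
  ext i j
  fin_cases i <;> fin_cases j <;>
    simp [trace_eq_matrix_trace b, norm_eq_matrix_det b, Matrix.mul_apply, Fin.sum_univ_two,
      Matrix.trace_fin_two, Matrix.det_fin_two, Matrix.algebraMap_eq_diagonal] <;> ring

theorem norm_add_algebraMap (b : Module.Basis (Fin 2) R S) (x : S) (c : R) :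
    norm R (x + algebraMap R S c) = norm R x + c * trace R S x + c ^ 2 := by
  rw [norm_eq_matrix_det b, norm_eq_matrix_det b, trace_eq_matrix_trace b, map_add,
    AlgHom.commutes, Matrix.algebraMap_eq_diagonal, Matrix.det_fin_two, Matrix.det_fin_two,
    Matrix.trace_fin_two]
  simp only [Matrix.add_apply, Matrix.diagonal_apply_eq, Matrix.diagonal_apply_ne, ne_eq,
    zero_ne_one, one_ne_zero, not_false_eq_true, Pi.algebraMap_apply, algebraMap_self,
    RingHom.id_apply, add_zero]
  ring

theorem trace_mul_self (b : Module.Basis (Fin 2) R S) (x : S) :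
    trace R S (x * x) = trace R S x ^ 2 - 2 * norm R x := by
  rw [mul_self_eq_trace_smul_sub_norm b, map_sub, map_smul, trace_algebraMap_of_basis b]
  simp only [smul_eq_mul, Fintype.card_fin, nsmul_eq_mul]
  push_cast
  ring

theorem exists_trace_sq_sub_four_mul_norm_eq (b : Module.Basis (Fin 2) R S) (x : S) :
    ∃ c : R, trace R S x ^ 2 - 4 * norm R x = c ^ 2 * discr R b := by
  refine ⟨(b.toMatrix ![1, x]).det, ?_⟩
  rw [← discr_of_matrix_vecMul, b.toMatrix_map_vecMul, discr_def, Matrix.det_fin_two]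
  have htrace_one : trace R S 1 = 2 := by
    simpa using trace_algebraMap_of_basis b (1 : R)
  simp only [traceMatrix_apply, traceForm_apply, Matrix.cons_val_zero, Matrix.cons_val_one,
    Matrix.cons_val_fin_one, mul_one, one_mul, htrace_one]
  linear_combination (-2) * trace_mul_self b x

theorem add_one_mul_self_eq_norm_smul (b : Module.Basis (Fin 2) R S) {x : S}
    (hx : norm R x = 1) : (x + 1) * (x + 1) = norm R (x + 1) • x := by
  have hnorm := norm_add_algebraMap b x 1
  have hsq := mul_self_eq_trace_smul_sub_norm b x
  rw [map_one, hx] at hnorm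
  rw [hx, map_one, Algebra.smul_def] at hsq
  rw [hnorm, Algebra.smul_def]
  simp only [map_add, map_mul, map_one, map_pow]
  linear_combination hsq

theorem sub_one_mul_self_eq_neg_norm_smul (b : Module.Basis (Fin 2) R S) {x : S}
    (hx : norm R x = 1) : (x - 1) * (x - 1) = -norm R (x - 1) • x := by
  have hnorm := norm_add_algebraMap b x (-1)
  have hsq := mul_self_eq_trace_smul_sub_norm b x
  rw [map_neg, map_one, ← sub_eq_add_neg, hx] at hnorm
  rw [hx, map_one, Algebra.smul_def] at hsq
  rw [hnorm, Algebra.smul_def]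
  simp only [map_neg, map_add, map_mul, map_one, map_pow]
  linear_combination hsq

theorem two_dvd_trace_of_mul_self_eq (hR : Prime (2 : R)) (b : Module.Basis (Fin 2) R S)
    {x z : S} (h : x * x = 2 * z) : 2 ∣ trace R S x := by
  have htrace : trace R S (x * x) = 2 * trace R S z := by
    rw [h, two_mul, map_add, two_mul]
  rw [trace_mul_self b] at htrace
  exact hR.dvd_of_dvd_pow (n := 2) ⟨trace R S z + norm R x, by linear_combination htrace⟩

end RankTwo

theorem exists_eq_smul_of_prime_dvd_trace_mul {ι : Type*} [Fintype ι] [DecidableEq ι]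
    (b : Module.Basis ι R S) {p : R} (hp : Prime p) (hb : ¬ p ∣ discr R b) {x : S}
    (hx : ∀ i, p ∣ trace R S (x * b i)) : ∃ y, x = p • y := by
  have hcoord (i : ι) : p ∣ b.equivFun x i := by
    have hadj : discr R b • b.equivFun x =
        (traceMatrix R b).adjugate.mulVec fun j => trace R S (x * b j) := by
      rw [← traceMatrix_of_basis_mulVec, Matrix.mulVec_mulVec, Matrix.adjugate_mul,
        Matrix.smul_mulVec, Matrix.one_mulVec, discr_def]
    have hdvd : p ∣ discr R b * b.equivFun x i := by
      rw [← smul_eq_mul, ← Pi.smul_apply, hadj]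
      exact Finset.dvd_sum fun j _ => dvd_mul_of_dvd_right (hx j) _
    exact (hp.dvd_or_dvd hdvd).resolve_left hb
  choose r hr using hcoord
  refine ⟨∑ i, r i • b i, ?_⟩
  conv_lhs => rw [← b.sum_equivFun x]
  simp only [hr, Finset.smul_sum, mul_smul]

theorem exists_eq_two_mul_of_mul_self_eq (hR : Prime (2 : R)) (b : Module.Basis (Fin 2) R S)
    (hb : ¬ 2 ∣ discr R b) {x z : S} (h : x * x = 2 * z) : ∃ y, x = 2 * y := by
  obtain ⟨y, rfl⟩ := exists_eq_smul_of_prime_dvd_trace_mul b hR hb fun i =>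
    two_dvd_trace_of_mul_self_eq hR b (z := z * (b i * b i))
      (by rw [mul_mul_mul_comm, h, mul_assoc])
  exact ⟨y, by rw [two_smul, two_mul]⟩

end Algebra

namespace Int

theorem exists_eq_mul_sq_of_mul_sq_eq {n c X D : ℤ} (hn : Squarefree n) (hc : c ≠ 0)
    (h : n * X ^ 2 = c ^ 2 * D) : ∃ u, D = n * u ^ 2 := by
  obtain ⟨v, hv⟩ : c ∣ n * X :=
    (Int.pow_dvd_pow_iff two_ne_zero).mp ⟨n * D, by linear_combination n * h⟩
  have hvsq : v ^ 2 = n * D :=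
    mul_left_cancel₀ (pow_ne_zero 2 hc) (by linear_combination n * h - (n * X + c * v) * hv)
  obtain ⟨u, rfl⟩ : n ∣ v := (hn.dvd_pow_iff_dvd two_ne_zero).mp ⟨D, hvsq⟩
  exact ⟨u, mul_left_cancel₀ hn.ne_zero (by linear_combination -hvsq)⟩

theorem exists_eq_mul_mul_sq_of_mul_mul_sq_eq {m m' S c D : ℤ} (hm : Squarefree m)
    (hm' : Squarefree m') (hcommon : ∀ p : ℤ, Prime p → p ∣ m → p ∣ m' → p ∣ 2)
    (hD : 2 ∣ m → 2 ∣ D) (hc : c ≠ 0) (h : m * m' * S ^ 2 = c ^ 2 * D) :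
    ∃ r, D = m * m' * r ^ 2 := by
  by_cases heven : 2 ∣ m ∧ 2 ∣ m'
  · obtain ⟨⟨a, rfl⟩, ⟨a', rfl⟩⟩ := heven
    have hodd : ∀ {k : ℤ}, Squarefree (2 * k) → ¬ 2 ∣ k := fun hk ⟨j, hj⟩ =>
      Int.prime_two.not_isUnit (hk 2 ⟨j, by rw [hj, mul_assoc]⟩)
    have hcop : IsCoprime a a' := isCoprime_of_prime_dvd
        (by simp [hm.of_mul_right.ne_zero]) fun p hp hpa hpa' =>
      hodd hm ((hp.associated_of_dvd Int.prime_two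
        (hcommon p hp (hpa.mul_left 2) (hpa'.mul_left 2))).dvd'.trans hpa)
    have hsf : Squarefree (a * a') :=
      squarefree_mul_iff.mpr ⟨hcop.isRelPrime, hm.of_mul_right, hm'.of_mul_right⟩
    obtain ⟨u, rfl⟩ := exists_eq_mul_sq_of_mul_sq_eq hsf hc (X := 2 * S) (D := D)
      (by linear_combination h)
    obtain ⟨r, rfl⟩ : 2 ∣ u := by
      rcases Int.prime_two.dvd_or_dvd (hD (dvd_mul_right 2 a)) with h2 | h2
      · rcases Int.prime_two.dvd_or_dvd h2 with h2 | h2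
        exacts [absurd h2 (hodd hm), absurd h2 (hodd hm')]
      · exact Int.prime_two.dvd_of_dvd_pow h2
    exact ⟨r, by ring⟩
  · have hcop : IsCoprime m m' := isCoprime_of_prime_dvd (by simp [hm.ne_zero])
      fun p hp hpm hpm' =>
        have h2p := (hp.associated_of_dvd Int.prime_two (hcommon p hp hpm hpm')).dvd'
        heven ⟨h2p.trans hpm, h2p.trans hpm'⟩
    exact exists_eq_mul_sq_of_mul_sq_eq
      (squarefree_mul_iff.mpr ⟨hcop.isRelPrime, hm, hm'⟩) hc h

end Int

section IntegrallyClosed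

open Algebra

variable {O : Type*} [CommRing O] [IsDomain O] [IsIntegrallyClosed O]

theorem two_dvd_discr_of_norm_add_one_eq (b : Module.Basis (Fin 2) ℤ O) {x : O}
    (hx : norm ℤ x = 1) (hx1 : x ≠ -1) {m s : ℤ} (hm : Squarefree m) (h2m : 2 ∣ m)
    (hs : norm ℤ (x + 1) = m * s ^ 2) : 2 ∣ discr ℤ b := by
  by_contra hodd
  have hsq : (x + 1) ^ 2 = (s : O) ^ 2 * (m * x) := by
    rw [sq, add_one_mul_self_eq_norm_smul b hx, hs, zsmul_eq_mul]; push_cast; ring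
  have hs0 : (s : O) ≠ 0 := by
    rintro hs0
    rw [hs0, zero_pow two_ne_zero, zero_mul, pow_eq_zero_iff two_ne_zero] at hsq
    exact hx1 (eq_neg_of_add_eq_zero_left hsq)
  obtain ⟨β, hβ⟩ := (IsIntegrallyClosed.pow_dvd_pow_iff two_ne_zero).mp ⟨_, hsq⟩
  have hβsq : β * β = m * x :=
    mul_left_cancel₀ (pow_ne_zero 2 hs0) (by rw [← hsq, hβ]; ring)
  obtain ⟨m₁, rfl⟩ := h2m
  obtain ⟨δ, rfl⟩ := exists_eq_two_mul_of_mul_self_eq Int.prime_two b hodd (z := m₁ * x)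
    (by rw [hβsq]; push_cast; ring)
  have hnorm := congrArg (norm ℤ)
    (show algebraMap ℤ O 4 * (δ * δ) = algebraMap ℤ O (2 * m₁) * x by
      rw [algebraMap_int_eq, eq_intCast, eq_intCast, ← hβsq]; push_cast; ring)
  rw [map_mul, map_mul, map_mul, norm_algebraMap_of_basis b, norm_algebraMap_of_basis b, hx,
    Fintype.card_fin] at hnorm
  have h2 : 2 ∣ m₁ := by
    rcases sq_eq_sq_iff_eq_or_eq_neg.mp
      (show (2 * m₁) ^ 2 = (4 * norm ℤ δ) ^ 2 by linear_combination -hnorm) with h | h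
    · exact ⟨norm ℤ δ, by omega⟩
    · exact ⟨-norm ℤ δ, by omega⟩
  exact Int.prime_two.not_isUnit (hm 2 (mul_dvd_mul_left 2 h2))

theorem exists_discr_eq_mul_mul_sq_of_norm_eq_one (b : Module.Basis (Fin 2) ℤ O) {x : O}
    (hx : norm ℤ x = 1) (hx1 : x ≠ 1) (hxm1 : x ≠ -1) {m m' s s' : ℤ}
    (hm : Squarefree m) (hs : norm ℤ (x + 1) = m * s ^ 2)
    (hm' : Squarefree m') (hs' : -norm ℤ (x - 1) = m' * s' ^ 2) :
    ∃ r, discr ℤ b = m * m' * r ^ 2 := by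
  set t := trace ℤ O x
  have hplus : t + 2 = m * s ^ 2 := by
    rw [← hs, ← map_one (algebraMap ℤ O), norm_add_algebraMap b, hx]; ring
  have hminus : t - 2 = m' * s' ^ 2 := by
    have hnorm := norm_add_algebraMap b x (-1)
    rw [map_neg, map_one, ← sub_eq_add_neg, hx] at hnorm
    rw [← hs', hnorm]; ring
  obtain ⟨c, hc⟩ := exists_trace_sq_sub_four_mul_norm_eq b x
  rw [hx] at hc
  have hc0 : c ≠ 0 := by
    rintro rfl
    rcases mul_eq_zero.mp (show (t + 2) * (t - 2) = 0 by linear_combination hc) with h | h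
    · have hsq := add_one_mul_self_eq_norm_smul b hx
      rw [hs, ← hplus, h, zero_smul, mul_self_eq_zero] at hsq
      exact hxm1 (eq_neg_of_add_eq_zero_left hsq)
    · have hsq := sub_one_mul_self_eq_neg_norm_smul b hx
      rw [hs', ← hminus, h, zero_smul, mul_self_eq_zero, sub_eq_zero] at hsq
      exact hx1 hsq
  refine Int.exists_eq_mul_mul_sq_of_mul_mul_sq_eq hm hm' (fun p hp hpm hpm' => ?_)
    (fun h2m => two_dvd_discr_of_norm_add_one_eq b hx hxm1 hm h2m hs) hc0 (S := s * s')
    (by linear_combination hc - (t - 2) * hplus - m * s ^ 2 * hminus)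
  have h4 : p ∣ 2 ^ 2 := by
    have hdvd := dvd_sub (hpm.trans ⟨_, hplus⟩) (hpm'.trans ⟨_, hminus⟩)
    rwa [add_sub_sub_cancel, ← two_mul] at hdvd
  exact hp.dvd_of_dvd_pow h4

end IntegrallyClosed

open Polynomial in
theorem finrank_adjoin_sqrt_intCast_eq_two {d : ℤ} (hd : 0 ≤ d) (hsq : ¬ IsSquare d) :
    Module.finrank ℚ ℚ⟮Real.sqrt (d : ℝ)⟯ = 2 := by
  have hroot : aeval (Real.sqrt (d : ℝ)) (X ^ 2 - C (d : ℚ)) = 0 := by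
    simp [Real.sq_sqrt (Int.cast_nonneg_iff.mpr hd)]
  have hirr : Irreducible (X ^ 2 - C (d : ℚ)) :=
    X_pow_sub_C_irreducible_of_prime Nat.prime_two fun q hq =>
      hsq (Rat.isSquare_intCast_iff.mp ⟨q, by rw [← hq, sq]⟩)
  have hmonic : (X ^ 2 - C (d : ℚ)).Monic := monic_X_pow_sub_C _ two_ne_zero
  rw [adjoin.finrank ⟨_, hmonic, hroot⟩, ← minpoly.eq_of_irreducible_of_monic hirr hroot hmonic,
    natDegree_X_pow_sub_C]

theorem squarefree_part_discr_div_m_general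
    (d : ℤ) (hd1 : 1 < d) (hdsf : Squarefree d)
    (K : IntermediateField ℚ ℝ) (hK : K = ℚ⟮(Real.sqrt (d : ℝ))⟯) [NumberField K]
    (ε : (𝓞 K)ˣ)
    (hpos : 1 < (((ε : 𝓞 K) : K) : ℝ))
    (hnorm : Algebra.norm ℤ (ε : 𝓞 K) = 1)
    (m : ℤ) (hmsf : Squarefree m)
    (hm : ∃ s : ℤ, Algebra.norm ℤ ((ε : 𝓞 K) + 1) = m * s ^ 2)
    (m' : ℤ) (hm'sf : Squarefree m')
    (hm' : ∃ s : ℤ, -Algebra.norm ℤ ((ε : 𝓞 K) - 1) = m' * s ^ 2) :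
    ∃ s : ℤ, NumberField.discr K = m * m' * s ^ 2 := by
  obtain ⟨s, hs⟩ := hm
  obtain ⟨s', hs'⟩ := hm'
  have hd : ¬ IsSquare d := by
    rintro ⟨r, rfl⟩
    rcases Int.isUnit_iff.mp (hdsf r dvd_rfl) with rfl | rfl <;> norm_num at hd1
  have hrank : Module.finrank ℤ (𝓞 K) = 2 := by
    subst hK
    rw [RingOfIntegers.rank, finrank_adjoin_sqrt_intCast_eq_two (by omega) hd]
  let b : Module.Basis (Fin 2) ℤ (𝓞 K) := (RingOfIntegers.basis K).reindex
    (Fintype.equivFinOfCardEq (by rw [← Module.finrank_eq_card_chooseBasisIndex, hrank]))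
  rw [← NumberField.discr_eq_discr K b]
  refine exists_discr_eq_mul_mul_sq_of_norm_eq_one b hnorm ?_ ?_ hmsf hs hm'sf hs'
  · rintro h; simp [h] at hpos
  · rintro h; norm_num [h] at hpos

/-- Let `k = ℚ(√d)` have fundamental unit `ε > 1` of norm `+1`, `m` the squarefree part
of `Norm(ε+1)`, and `m'` the squarefree part of `-Norm(ε-1)`.  Then the squarefree part of
`D/m` equals `m'`, where `D` is the discriminant of `k`; equivalently `D = m·m'·s²` for
some integer `s`. -/
theorem squarefree_part_discr_div_m
    (d : ℤ) (hd1 : 1 < d) (hdsf : Squarefree d)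
    (K : IntermediateField ℚ ℝ) (hK : K = ℚ⟮(Real.sqrt (d : ℝ))⟯) [NumberField K]
    (ε : (𝓞 K)ˣ)
    (hfund : ∀ u : (𝓞 K)ˣ, ∃ n : ℤ, u = ε ^ n ∨ u = -ε ^ n)
    (hpos : 1 < (((ε : 𝓞 K) : K) : ℝ))
    (hnorm : Algebra.norm ℤ (ε : 𝓞 K) = 1)
    (m : ℤ) (hmsf : Squarefree m)
    (hm : ∃ s : ℤ, Algebra.norm ℤ ((ε : 𝓞 K) + 1) = m * s ^ 2)
    (m' : ℤ) (hm'sf : Squarefree m')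
    (hm' : ∃ s : ℤ, -Algebra.norm ℤ ((ε : 𝓞 K) - 1) = m' * s ^ 2) :
    ∃ s : ℤ, NumberField.discr K = m * m' * s ^ 2 :=
  squarefree_part_discr_div_m_general d hd1 hdsf K hK ε hpos hnorm m hmsf hm m' hm'sf hm'
end

section
/- If q is a prime with q ≡ 3 (mod 8), then the fundamental unit ε of ℚ(√q) has norm +1 and the squarefree part of Norm(ε+1) equals 2q. -/
/-!
Write `ε = a + b√q`. As `q ≡ 3 (mod 4)`, the ring of integers of `ℚ(√q)` is `ℤ[√q]`, so
`a, b ∈ ℤ`, and the norm `a² - q b²` of `ε` is `1` because `-1` is not a square modulo `q`.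
Then `N(ε + 1) = 2(a + 1)`, and it remains to show `a + 1 = q s²`. Split `(a - 1)(a + 1) = q b²`
(for `a` even) or `k(k + 1) = q c²` (for `a = 2k + 1`, `b = 2c`) into coprime factors, which are
squares up to the factor `q`. Of the four shapes, `a - 1 = q s², a + 1 = t²` is impossible
modulo `8`, `k = s², k + 1 = q t²` makes `-1` a square modulo `q`, and `k = q v², k + 1 = u²`
makes `ε = (u + v√q)²` a square, which a fundamental unit is not; so `a + 1 = q s²`.
-/

open NumberField IntermediateField Polynomial

theorem Rat.exists_intCast_eq_of_sq_mul_prime {p : ℕ} (hp : p.Prime) {r : ℚ} {n : ℤ}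
    (h : r ^ 2 * p = n) : ∃ m : ℤ, r = m := by
  have hint : IsIntegral ℤ (p * r) :=
    ⟨X ^ 2 - C (p * n), monic_X_pow_sub_C _ two_ne_zero, by
      rw [eval₂_sub, eval₂_pow, eval₂_X, eval₂_C]; push_cast
      linear_combination (p : ℚ) * h⟩
  obtain ⟨z, hz⟩ := IsIntegrallyClosed.isIntegral_iff.mp hint
  replace hz : (z : ℚ) = p * r := hz
  have hzsq : z ^ 2 = p * n := by exact_mod_cast (by rw [hz, ← h]; ring : (z : ℚ) ^ 2 = p * n)
  obtain ⟨m, rfl⟩ := (Nat.prime_iff_prime_int.mp hp).dvd_of_dvd_pow (⟨n, hzsq⟩ : (p : ℤ) ∣ z ^ 2)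
  refine ⟨m, mul_left_cancel₀ (Nat.cast_ne_zero.mpr hp.ne_zero : (p : ℚ) ≠ 0) ?_⟩
  rw [← hz]
  push_cast
  ring

theorem two_dvd_of_four_dvd_sq_sub_mul_sq {q : ℕ} (hq4 : q % 4 = 3) {x y : ℤ}
    (h : 4 ∣ x ^ 2 - q * y ^ 2) : 2 ∣ x ∧ 2 ∣ y := by
  have key : ∀ a b : ZMod 4, a ^ 2 - 3 * b ^ 2 = 0 → 2 * a = 0 ∧ 2 * b = 0 := by decide
  have hq : (q : ZMod 4) = 3 := by rw [← ZMod.natCast_mod, hq4]; rfl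
  have h4 := (ZMod.intCast_zmod_eq_zero_iff_dvd _ 4).mpr h
  push_cast [hq] at h4
  obtain ⟨hx, hy⟩ := key _ _ h4
  have hx' := (ZMod.intCast_zmod_eq_zero_iff_dvd (2 * x) 4).mp (by push_cast; exact hx)
  have hy' := (ZMod.intCast_zmod_eq_zero_iff_dvd (2 * y) 4).mp (by push_cast; exact hy)
  omega

theorem exists_intCast_eq_of_two_mul_of_sq_sub_mul_sq {q : ℕ} (hq : q.Prime) (hq4 : q % 4 = 3)
    {x y : ℚ} {T N : ℤ} (hT : (T : ℚ) = 2 * x) (hN : (N : ℚ) = x ^ 2 - q * y ^ 2) :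
    ∃ a b : ℤ, (a : ℚ) = x ∧ (b : ℚ) = y := by
  obtain ⟨B, hB⟩ := Rat.exists_intCast_eq_of_sq_mul_prime hq (r := 2 * y) (n := T ^ 2 - 4 * N)
    (by push_cast; rw [hT, hN]; ring)
  have hTB : T ^ 2 - q * B ^ 2 = 4 * N := by
    exact_mod_cast (by rw [hT, ← hB, hN]; ring : (T : ℚ) ^ 2 - q * (B : ℚ) ^ 2 = 4 * N)
  obtain ⟨⟨a, rfl⟩, ⟨b, rfl⟩⟩ := two_dvd_of_four_dvd_sq_sub_mul_sq hq4 ⟨N, hTB⟩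
  exact ⟨a, b, by push_cast at hT; linarith, by push_cast at hB; linarith⟩

theorem not_dvd_sq_add_one_of_mod_four_eq_three {q : ℕ} (hq : q.Prime) (hq4 : q % 4 = 3)
    (a : ℤ) : ¬(q : ℤ) ∣ a ^ 2 + 1 := by
  have := Fact.mk hq
  intro h
  refine ZMod.mod_four_ne_three_of_sq_eq_neg_one (y := (a : ZMod q)) ?_ hq4
  have h0 := (ZMod.intCast_zmod_eq_zero_iff_dvd _ q).mpr h
  push_cast at h0
  linear_combination h0

theorem sq_sub_mul_sq_ne_two_of_mod_eight_eq_three {q : ℕ} (hq8 : q % 8 = 3) (u v : ℤ) :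
    u ^ 2 - q * v ^ 2 ≠ 2 := by
  have key : ∀ x y : ZMod 8, x ^ 2 - 3 * y ^ 2 ≠ 2 := by decide
  have hq : (q : ZMod 8) = 3 := by rw [← ZMod.natCast_mod, hq8]; rfl
  intro h
  exact key u v (by simpa [hq] using congrArg (Int.cast : ℤ → ZMod 8) h)

theorem Int.exists_sq_of_isCoprime_of_pos {a b c : ℤ} (h : IsCoprime a b) (heq : a * b = c ^ 2)
    (ha : 0 < a) : ∃ s, a = s ^ 2 := by
  obtain ⟨s, hs | hs⟩ := Int.sq_of_isCoprime h heq
  · exact ⟨s, hs⟩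
  · nlinarith [sq_nonneg s]

theorem Int.exists_sq_of_isCoprime_of_mul_eq_prime_mul_sq_s6 {p : ℕ} (hp : p.Prime) {u w c : ℤ}
    (hco : IsCoprime u w) (hu : 0 < u) (hw : 0 < w) (h : u * w = p * c ^ 2) :
    (∃ s t, u = p * s ^ 2 ∧ w = t ^ 2) ∨ (∃ s t, u = s ^ 2 ∧ w = p * t ^ 2) := by
  have hp0 : (0 : ℤ) < p := by exact_mod_cast hp.pos
  have key : ∀ u w : ℤ, IsCoprime u w → 0 < u → 0 < w → u * w = p * c ^ 2 → (p : ℤ) ∣ u →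
      ∃ s t, u = p * s ^ 2 ∧ w = t ^ 2 := by
    rintro u w hco hu hw h ⟨u', rfl⟩
    have hu' : u' * w = c ^ 2 := mul_left_cancel₀ hp0.ne' (by rw [← h]; ring)
    have hco' : IsCoprime u' w := hco.of_isCoprime_of_dvd_left (dvd_mul_left _ _)
    obtain ⟨s, rfl⟩ := Int.exists_sq_of_isCoprime_of_pos hco' hu' (pos_of_mul_pos_right hu hp0.le)
    obtain ⟨t, rfl⟩ := Int.exists_sq_of_isCoprime_of_pos hco'.symm (by rw [mul_comm, hu']) hw
    exact ⟨s, t, rfl, rfl⟩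
  rcases (Nat.prime_iff_prime_int.mp hp).dvd_mul.mp ⟨c ^ 2, h⟩ with hpu | hpw
  · exact .inl (key u w hco hu hw h hpu)
  · obtain ⟨s, t, hw, hu⟩ := key w u hco.symm hw hu (by rw [mul_comm, h]) hpw
    exact .inr ⟨t, s, hu, hw⟩

theorem add_one_eq_mul_sq_or_exists_sq_of_sq_sub_mul_sq_eq_one {q : ℕ} (hq : q.Prime)
    (hq8 : q % 8 = 3) {a b : ℤ} (h : a ^ 2 - q * b ^ 2 = 1) (ha : 1 < a) :
    (∃ s, a + 1 = q * s ^ 2) ∨ ∃ u v, a = u ^ 2 + q * v ^ 2 ∧ b = 2 * u * v := by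
  rcases Int.even_or_odd a with ⟨k, rfl⟩ | ⟨k, rfl⟩
  · left
    have hco : IsCoprime (k + k - 1) (k + k + 1) := ⟨-(k + 1), k, by ring⟩
    have hkb : (k + k - 1) * (k + k + 1) = q * b ^ 2 := by linear_combination h
    rcases Int.exists_sq_of_isCoprime_of_mul_eq_prime_mul_sq_s6 hq hco (by omega) (by omega) hkb with
      ⟨s, t, h₁, h₂⟩ | ⟨s, t, -, h₂⟩
    · exact absurd (by linear_combination h₁ - h₂)
        (sq_sub_mul_sq_ne_two_of_mod_eight_eq_three hq8 t s)
    · exact ⟨t, h₂⟩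
  · right
    obtain ⟨c, rfl⟩ : Even b := by
      have hqb : Even ((q : ℤ) * b ^ 2) := ⟨2 * k ^ 2 + 2 * k, by linear_combination -h⟩
      have hq : ¬Even (q : ℤ) := by rw [Int.not_even_iff_odd, Int.odd_iff]; omega
      exact (Int.even_pow.mp ((Int.even_mul.mp hqb).resolve_left hq)).1
    have hkc : k * (k + 1) = q * c ^ 2 := by linarith
    have hco : IsCoprime k (k + 1) := ⟨-1, 1, by ring⟩
    rcases Int.exists_sq_of_isCoprime_of_mul_eq_prime_mul_sq_s6 hq hco (by omega) (by omega) hkc with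
      ⟨s, t, h₁, h₂⟩ | ⟨s, t, h₁, h₂⟩
    · have hq0 : (q : ℤ) ≠ 0 := by exact_mod_cast hq.ne_zero
      have hc : c ^ 2 = (t * s) ^ 2 :=
        mul_left_cancel₀ hq0 (by linear_combination -hkc + (k + 1) * h₁ + q * s ^ 2 * h₂)
      rcases sq_eq_sq_iff_eq_or_eq_neg.mp hc with hc | hc
      · exact ⟨t, s, by linear_combination h₁ + h₂, by rw [hc]; ring⟩
      · exact ⟨t, -s, by linear_combination h₁ + h₂, by rw [hc]; ring⟩
    · exact absurd ⟨t ^ 2, by linear_combination h₂ - h₁⟩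
        (not_dvd_sq_add_one_of_mod_four_eq_three hq (by omega) s)

theorem one_lt_of_sq_sub_mul_sq_eq_one {q : ℕ} {a b : ℤ} (h : a ^ 2 - q * b ^ 2 = 1)
    (he : 1 < a + b * √(q : ℝ)) : 1 < a := by
  have hconj : (a + b * √(q : ℝ)) * (a - b * √(q : ℝ)) = 1 := by
    rw [← mul_self_sub_mul_self, mul_mul_mul_comm, Real.mul_self_sqrt q.cast_nonneg]
    exact_mod_cast by linear_combination h
  have : (1 : ℝ) < a := by nlinarith
  exact_mod_cast this

theorem Units.not_isSquare_of_forall_eq_zpow_or_neg {M : Type*} [CommMonoid M] [HasDistribNeg M]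
    {ε : Mˣ} (hε : ¬IsOfFinOrder ε) (hfund : ∀ u : Mˣ, ∃ n : ℤ, u = ε ^ n ∨ u = -ε ^ n) :
    ¬IsSquare (ε : M) := by
  rintro ⟨x, hx⟩
  have hxu : IsUnit x := isUnit_of_mul_isUnit_left (hx ▸ ε.isUnit)
  obtain ⟨n, hn⟩ := hfund hxu.unit
  have h : ε ^ (1 : ℤ) = ε ^ (n + n) := calc
    ε ^ (1 : ℤ) = hxu.unit * hxu.unit := by rw [zpow_one]; exact Units.ext hx
    _ = ε ^ n * ε ^ n := by rcases hn with hn | hn <;> simp [hn]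
    _ = ε ^ (n + n) := (zpow_add ε n n).symm
  have := injective_zpow_iff_not_isOfFinOrder.mpr hε h
  omega

theorem Units.not_isOfFinOrder_of_one_lt_map {R : Type*} [Monoid R] (f : R →* ℝ) {ε : Rˣ}
    (h : 1 < f ε) : ¬IsOfFinOrder ε := by
  intro hfin
  obtain ⟨n, hn, hpow⟩ := isOfFinOrder_iff_pow_eq_one.mp hfin
  have := congrArg (fun u : Rˣ => f u) hpow
  simp only [Units.val_pow_eq_pow_val, map_pow, Units.val_one, map_one] at this
  exact (one_lt_pow₀ h hn.ne').ne' this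

section QuadraticField

variable (q : ℕ)

theorem isIntegral_sqrt_natCast : IsIntegral ℤ (√q : ℝ) :=
  ⟨X ^ 2 - C (q : ℤ), monic_X_pow_sub_C _ two_ne_zero, by simp⟩

instance : NumberField ℚ⟮√q⟯ where
  to_finiteDimensional := adjoin.finiteDimensional (isIntegral_sqrt_natCast q).tower_top

theorem gen_sqrt_sq : AdjoinSimple.gen ℚ (√q : ℝ) ^ 2 = q :=
  Subtype.ext (by simp)

noncomputable def sqrtGen : 𝓞 ℚ⟮√q⟯ :=
  ⟨AdjoinSimple.gen ℚ (√q : ℝ),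
    ⟨X ^ 2 - C (q : ℤ), monic_X_pow_sub_C _ two_ne_zero, by simp [gen_sqrt_sq]⟩⟩

@[simp]
theorem coe_sqrtGen : (sqrtGen q : ℚ⟮√q⟯) = AdjoinSimple.gen ℚ (√q : ℝ) := rfl

theorem sqrtGen_sq : sqrtGen q ^ 2 = q :=
  RingOfIntegers.ext (by simp [gen_sqrt_sq])

variable {q}

theorem minpoly_sqrt_natCast (hq : Irrational (√q : ℝ)) :
    minpoly ℚ (√q : ℝ) = X ^ 2 - C (q : ℚ) := by
  refine (minpoly.eq_of_irreducible_of_monic ?_ (by simp) (monic_X_pow_sub_C _ two_ne_zero)).symm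
  refine X_pow_sub_C_irreducible_of_prime Nat.prime_two fun b hb => hq ⟨|b|, ?_⟩
  rw [Rat.cast_abs, ← Real.sqrt_sq_eq_abs]
  exact_mod_cast congrArg Real.sqrt (congrArg (Rat.cast : ℚ → ℝ) hb)

noncomputable def sqrtBasis (hq : Irrational (√q : ℝ)) : Module.Basis (Fin 2) ℚ ℚ⟮√q⟯ :=
  (adjoin.powerBasis (isIntegral_sqrt_natCast q).tower_top).basis.reindex
    (finCongr (by rw [adjoin.powerBasis_dim, minpoly_sqrt_natCast hq, natDegree_X_pow_sub_C]))

theorem sqrtBasis_apply (hq : Irrational (√q : ℝ)) (i : Fin 2) :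
    sqrtBasis hq i = AdjoinSimple.gen ℚ (√q : ℝ) ^ (i : ℕ) := by
  simp [sqrtBasis]

theorem exists_eq_algebraMap_add_smul_gen (hq : Irrational (√q : ℝ)) (α : ℚ⟮√q⟯) :
    ∃ x y : ℚ, α = algebraMap ℚ _ x + y • AdjoinSimple.gen ℚ (√q : ℝ) := by
  refine ⟨(sqrtBasis hq).repr α 0, (sqrtBasis hq).repr α 1, ?_⟩
  conv_lhs => rw [← (sqrtBasis hq).sum_repr α]
  simp [Fin.sum_univ_two, sqrtBasis_apply, Algebra.smul_def]

theorem leftMulMatrix_sqrtBasis (hq : Irrational (√q : ℝ)) (x y : ℚ) :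
    Algebra.leftMulMatrix (sqrtBasis hq) (algebraMap ℚ _ x + y • AdjoinSimple.gen ℚ (√q : ℝ)) =
      !![x, q * y; y, x] := by
  set B := sqrtBasis hq
  set α := algebraMap ℚ _ x + y • AdjoinSimple.gen ℚ (√q : ℝ)
  have hB0 : B 0 = 1 := by simp [B, sqrtBasis_apply]
  have hB1 : B 1 = AdjoinSimple.gen ℚ (√q : ℝ) := by simp [B, sqrtBasis_apply]
  have hmul0 : α * B 0 = x • B 0 + y • B 1 := by
    simp [α, hB0, hB1, Algebra.smul_def]
  have hmul1 : α * B 1 = (q * y) • B 0 + x • B 1 := by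
    simp [α, hB0, hB1, Algebra.smul_def, add_mul, mul_assoc, ← sq, gen_sqrt_sq]
    ring
  ext i j
  fin_cases i <;> fin_cases j <;> simp [Algebra.leftMulMatrix_eq_repr_mul, hmul0, hmul1]

theorem norm_algebraMap_add_smul_gen (hq : Irrational (√q : ℝ)) (x y : ℚ) :
    Algebra.norm ℚ (algebraMap ℚ _ x + y • AdjoinSimple.gen ℚ (√q : ℝ)) = x ^ 2 - q * y ^ 2 := by
  rw [Algebra.norm_eq_matrix_det (sqrtBasis hq), leftMulMatrix_sqrtBasis, Matrix.det_fin_two_of]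
  ring

theorem trace_algebraMap_add_smul_gen (hq : Irrational (√q : ℝ)) (x y : ℚ) :
    Algebra.trace ℚ _ (algebraMap ℚ _ x + y • AdjoinSimple.gen ℚ (√q : ℝ)) = 2 * x := by
  rw [Algebra.trace_eq_matrix_trace (sqrtBasis hq), leftMulMatrix_sqrtBasis,
    Matrix.trace_fin_two_of]
  ring

theorem coe_intCast_add_mul_sqrtGen (a b : ℤ) :
    (((a + b * sqrtGen q : 𝓞 ℚ⟮√q⟯)) : ℚ⟮√q⟯) =
      algebraMap ℚ _ a + (b : ℚ) • AdjoinSimple.gen ℚ (√q : ℝ) := by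
  simp [Algebra.smul_def]

theorem norm_intCast_add_mul_sqrtGen (hq : Irrational (√q : ℝ)) (a b : ℤ) :
    Algebra.norm ℤ (a + b * sqrtGen q : 𝓞 ℚ⟮√q⟯) = a ^ 2 - q * b ^ 2 := by
  apply Int.cast_injective (α := ℚ)
  rw [Algebra.coe_norm_int, coe_intCast_add_mul_sqrtGen, norm_algebraMap_add_smul_gen hq]
  push_cast
  ring

theorem exists_int_eq_add_mul_sqrtGen (hq : q.Prime) (hq4 : q % 4 = 3)
    (α : 𝓞 ℚ⟮√q⟯) : ∃ a b : ℤ, α = a + b * sqrtGen q := by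
  obtain ⟨x, y, hxy⟩ := exists_eq_algebraMap_add_smul_gen hq.irrational_sqrt (α : ℚ⟮√q⟯)
  obtain ⟨a, b, rfl, rfl⟩ := exists_intCast_eq_of_two_mul_of_sq_sub_mul_sq hq hq4
    (T := Algebra.trace ℤ _ α) (N := Algebra.norm ℤ α)
    (by rw [Algebra.coe_trace_int, hxy, trace_algebraMap_add_smul_gen hq.irrational_sqrt])
    (by rw [Algebra.coe_norm_int, hxy, norm_algebraMap_add_smul_gen hq.irrational_sqrt])
  exact ⟨a, b, RingOfIntegers.ext (by rw [hxy, coe_intCast_add_mul_sqrtGen])⟩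

end QuadraticField

/-- If `q` is a prime with `q ≡ 3 (mod 8)`, then the fundamental unit `ε` of `ℚ(√q)` has
norm `+1` and the squarefree part of `Norm(ε+1)` equals `2q`. -/
theorem m_eq_two_q_of_prime_three_mod_eight
    (q : ℕ) (hq : q.Prime) (hq8 : q % 8 = 3)
    (K : IntermediateField ℚ ℝ) (hK : K = ℚ⟮(Real.sqrt q)⟯) [NumberField K]
    (ε : (𝓞 K)ˣ)
    (hfund : ∀ u : (𝓞 K)ˣ, ∃ n : ℤ, u = ε ^ n ∨ u = -ε ^ n)
    (hpos : 1 < (((ε : 𝓞 K) : K) : ℝ)) :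
    Algebra.norm ℤ (ε : 𝓞 K) = 1 ∧
      ∃ s : ℤ, Algebra.norm ℤ ((ε : 𝓞 K) + 1) = 2 * q * s ^ 2 := by
  subst hK
  obtain ⟨a, b, hab⟩ := exists_int_eq_add_mul_sqrtGen hq (by omega) (ε : 𝓞 ℚ⟮√q⟯)
  have hnorm : a ^ 2 - q * b ^ 2 = 1 := by
    have h := Int.isUnit_iff.mp (ε.isUnit.map (Algebra.norm ℤ))
    rw [hab, norm_intCast_add_mul_sqrtGen hq.irrational_sqrt] at h
    exact h.resolve_right fun h => not_dvd_sq_add_one_of_mod_four_eq_three hq (by omega) a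
      ⟨b ^ 2, by linear_combination h⟩
  have ha : 1 < a := by
    refine one_lt_of_sq_sub_mul_sq_eq_one hnorm ?_
    simpa [hab] using hpos
  refine ⟨by rw [hab, norm_intCast_add_mul_sqrtGen hq.irrational_sqrt, hnorm], ?_⟩
  rcases add_one_eq_mul_sq_or_exists_sq_of_sq_sub_mul_sq_eq_one hq hq8 hnorm ha with
    ⟨s, hs⟩ | ⟨u, v, rfl, rfl⟩
  · refine ⟨s, ?_⟩
    have h := norm_intCast_add_mul_sqrtGen hq.irrational_sqrt (a + 1) b
    push_cast at h
    rw [hab, add_right_comm, h]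
    linear_combination hnorm + 2 * hs
  · refine absurd ⟨u + v * sqrtGen q, ?_⟩ (Units.not_isSquare_of_forall_eq_zpow_or_neg
      (Units.not_isOfFinOrder_of_one_lt_map (algebraMap (𝓞 ℚ⟮√q⟯) ℝ) hpos) hfund)
    rw [hab]
    push_cast
    linear_combination -(v : 𝓞 ℚ⟮√q⟯) ^ 2 * sqrtGen_sq q
end

section
/- If q is a prime with q ≡ 7 (mod 8), then the fundamental unit ε of ℚ(√q) has norm +1 and the squarefree part of Norm(ε+1) equals 2. -/
/-!
Write `ε = A + B√q`. A priori `2A, 2B ∈ ℤ`, and since `q ≡ 3 (mod 4)` the equation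
`(2A)² - q(2B)² = ±4` forces both to be even and the sign to be `+`, so `N(ε) = A² - qB² = 1`.
Then `N(ε + 1) = 2(A + 1)`, and `(A - 1)(A + 1) = qB²` splits into coprime factors. For even `A`,
either `A + 1` is a square or `A - 1 = s²`, `A + 1 = qr²`, impossible modulo `8`. For odd
`A = 2m + 1` we have `B = 2n` and `m(m + 1) = qn²`, so either `ε = (s + r√q)²`, impossible for a
fundamental unit `ε > 1`, or `s² + 1 = qr²`, impossible modulo `4`.
-/

open NumberField IntermediateField Polynomial

lemma Int.exists_sq_of_isCoprime_of_nonneg {a b c : ℤ} (hab : IsCoprime a b) (ha : 0 ≤ a)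
    (h : a * b = c ^ 2) : ∃ s, a = s ^ 2 := by
  obtain ⟨s, hs | hs⟩ := Int.sq_of_isCoprime hab h
  · exact ⟨s, hs⟩
  · exact ⟨s, by nlinarith [sq_nonneg s]⟩

lemma Int.exists_sq_of_mul_eq_prime_mul_sq {p x y c : ℤ} (hp : Prime p) (hy : 0 < y)
    (hxy : IsCoprime x y) (h : x * y = p * c ^ 2) (hpx : p ∣ x) :
    (∃ r, x = p * r ^ 2) ∧ ∃ s, y = s ^ 2 := by
  obtain ⟨k, rfl⟩ := hpx
  have hky : k * y = c ^ 2 := mul_left_cancel₀ hp.ne_zero (by rw [← h]; ring)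
  have hk : 0 ≤ k := nonneg_of_mul_nonneg_left (hky ▸ sq_nonneg c) hy
  have hcop : IsCoprime k y := hxy.of_mul_left_right
  obtain ⟨r, rfl⟩ := exists_sq_of_isCoprime_of_nonneg hcop hk hky
  exact ⟨⟨r, rfl⟩, exists_sq_of_isCoprime_of_nonneg hcop.symm hy.le (by rw [mul_comm, hky])⟩

lemma Int.cast_zmod_eq_of_emod_eq {q k : ℤ} {n : ℕ} (h : q % n = k) : (q : ZMod n) = k := by
  rw [← ZMod.intCast_mod, h]

lemma Int.even_and_even_of_four_dvd_sq_sub_mul_sq {q x y : ℤ} (hq : q % 4 = 3)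
    (h : 4 ∣ x ^ 2 - q * y ^ 2) : Even x ∧ Even y := by
  have key : ∀ x y : ZMod 4, x ^ 2 - 3 * y ^ 2 = 0 → 2 * x = 0 ∧ 2 * y = 0 := by decide
  have hmod := (ZMod.intCast_zmod_eq_zero_iff_dvd _ 4).2 h
  push_cast [cast_zmod_eq_of_emod_eq (n := 4) (k := 3) hq] at hmod
  obtain ⟨hx, hy⟩ := key _ _ hmod
  rw [← Int.cast_ofNat, ← Int.cast_mul, ZMod.intCast_zmod_eq_zero_iff_dvd] at hx hy
  exact ⟨Int.even_iff.2 (by omega), Int.even_iff.2 (by omega)⟩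

lemma Int.sq_sub_mul_sq_ne_neg_one {q x y : ℤ} (hq : q % 4 = 3) : x ^ 2 - q * y ^ 2 ≠ -1 := by
  have key : ∀ x y : ZMod 4, x ^ 2 - 3 * y ^ 2 ≠ -1 := by decide
  intro h
  have hmod := congrArg (Int.cast : ℤ → ZMod 4) h
  push_cast [cast_zmod_eq_of_emod_eq (n := 4) (k := 3) hq] at hmod
  exact key _ _ hmod

lemma Int.eq_one_and_even_of_sq_sub_mul_sq_eq_four_mul {q T E N : ℤ} (hq : q % 4 = 3)
    (h : T ^ 2 - q * E ^ 2 = 4 * N) (hN : N = 1 ∨ N = -1) : N = 1 ∧ Even T ∧ Even E := by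
  obtain ⟨⟨t, rfl⟩, ⟨e, rfl⟩⟩ := even_and_even_of_four_dvd_sq_sub_mul_sq hq ⟨N, h⟩
  have hte : t ^ 2 - q * e ^ 2 = N := mul_left_cancel₀ four_ne_zero (by linear_combination h)
  exact ⟨hN.resolve_right fun hN ↦ sq_sub_mul_sq_ne_neg_one hq (hte.trans hN), ⟨t, rfl⟩, ⟨e, rfl⟩⟩

lemma Int.exists_add_one_eq_sq_of_even {q A B : ℤ} (hq : Prime q) (hq8 : q % 8 = 7) (hA : 0 < A)
    (hAe : Even A) (h : A ^ 2 - q * B ^ 2 = 1) : ∃ s, A + 1 = s ^ 2 := by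
  obtain ⟨m, rfl⟩ := hAe
  have hfac : (m + m - 1) * (m + m + 1) = q * B ^ 2 := by linear_combination h
  have hcop : IsCoprime (m + m - 1) (m + m + 1) := ⟨-(m + 1), m, by ring⟩
  rcases hq.dvd_mul.1 ⟨B ^ 2, hfac⟩ with hdvd | hdvd
  · exact (exists_sq_of_mul_eq_prime_mul_sq hq (by omega) hcop hfac hdvd).2
  · obtain ⟨⟨r, hr⟩, ⟨s, hs⟩⟩ := exists_sq_of_mul_eq_prime_mul_sq hq (by omega) hcop.symm
      (by rw [mul_comm, hfac]) hdvd
    have key : ∀ s r : ZMod 8, s ^ 2 + 2 ≠ 7 * r ^ 2 := by decide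
    have hmod := congrArg (Int.cast : ℤ → ZMod 8) (show s ^ 2 + 2 = q * r ^ 2 by linarith)
    push_cast [cast_zmod_eq_of_emod_eq (n := 8) (k := 7) hq8] at hmod
    exact absurd hmod (key _ _)

lemma Int.exists_sq_add_mul_sq_of_odd {q A B : ℤ} (hq : Prime q) (hq4 : q % 4 = 3) (hA : 0 < A)
    (hB : B ≠ 0) (hAo : Odd A) (h : A ^ 2 - q * B ^ 2 = 1) :
    ∃ s r, s ^ 2 + q * r ^ 2 = A ∧ 2 * s * r = B := by
  obtain ⟨m, rfl⟩ := hAo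
  have hqB : Even (q * B ^ 2) := ⟨2 * m ^ 2 + 2 * m, by linear_combination -h⟩
  obtain ⟨n, rfl⟩ : Even B := (Int.even_pow' two_ne_zero).1
    ((Int.even_mul.1 hqB).resolve_left (Int.not_even_iff_odd.2 (Int.odd_iff.2 (by omega))))
  have hfac : m * (m + 1) = q * n ^ 2 := mul_left_cancel₀ four_ne_zero (by linear_combination h)
  have hcop : IsCoprime m (m + 1) := ⟨-1, 1, by ring⟩
  have hm : 0 < m := by
    have : m ≠ 0 := by
      rintro rfl
      exact mul_ne_zero hq.ne_zero (pow_ne_zero 2 (by omega)) (by linarith)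
    omega
  rcases hq.dvd_mul.1 ⟨n ^ 2, hfac⟩ with hdvd | hdvd
  · obtain ⟨⟨r, hr⟩, ⟨s, hs⟩⟩ := exists_sq_of_mul_eq_prime_mul_sq hq (by omega) hcop hfac hdvd
    have hsr : (s * r) ^ 2 = n ^ 2 :=
      mul_left_cancel₀ hq.ne_zero (by linear_combination hfac - m * hs - s ^ 2 * hr)
    rcases sq_eq_sq_iff_eq_or_eq_neg.1 hsr with hsr | hsr
    · exact ⟨s, r, by linarith, by linear_combination 2 * hsr⟩
    · exact ⟨s, -r, by linear_combination -hs - hr, by linear_combination -2 * hsr⟩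
  · obtain ⟨⟨r, hr⟩, ⟨s, hs⟩⟩ := exists_sq_of_mul_eq_prime_mul_sq hq hm hcop.symm
      (by rw [mul_comm, hfac]) hdvd
    have key : ∀ s r : ZMod 4, s ^ 2 + 1 ≠ 3 * r ^ 2 := by decide
    have hmod := congrArg (Int.cast : ℤ → ZMod 4) (show s ^ 2 + 1 = q * r ^ 2 by linarith)
    push_cast [cast_zmod_eq_of_emod_eq (n := 4) (k := 3) hq4] at hmod
    exact absurd hmod (key _ _)

lemma Int.exists_add_one_eq_sq_or_exists_sq_add_mul_sq {q A B : ℤ} (hq : Prime q) (hq8 : q % 8 = 7)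
    (hA : 0 < A) (hB : B ≠ 0) (h : A ^ 2 - q * B ^ 2 = 1) :
    (∃ s, A + 1 = s ^ 2) ∨ ∃ s r, s ^ 2 + q * r ^ 2 = A ∧ 2 * s * r = B := by
  rcases Int.even_or_odd A with hAe | hAo
  · exact .inl (exists_add_one_eq_sq_of_even hq hq8 hA hAe h)
  · exact .inr (exists_sq_add_mul_sq_of_odd hq (by omega) hA hB hAo h)

lemma Rat.exists_intCast_eq_of_squarefree_mul_sq {p m : ℤ} (hp : Squarefree p) {r : ℚ}
    (h : p * r ^ 2 = m) : ∃ n : ℤ, (n : ℚ) = r := by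
  have hnum : p * r.num ^ 2 = m * (r.den : ℤ) ^ 2 := by
    have : (p : ℚ) * r.num ^ 2 = m * r.den ^ 2 := by
      rw [← Rat.mul_den_eq_num, ← h]; ring
    exact_mod_cast this
  have hcop : IsCoprime ((r.den : ℤ) ^ 2) (r.num ^ 2) := r.isCoprime_num_den.symm.pow
  have hden : IsUnit (r.den : ℤ) :=
    hp _ (by rw [← sq]; exact hcop.dvd_of_dvd_mul_right ⟨m, by rw [hnum, mul_comm]⟩)
  exact ⟨r.num, Rat.coe_int_num_of_den_eq_one (Nat.isUnit_iff.1 (Int.ofNat_isUnit.1 hden))⟩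

lemma pos_and_pos_of_sq_sub_mul_sq_eq_one {a b d : ℝ} (hd : 0 ≤ d) (h : a ^ 2 - d * b ^ 2 = 1)
    (h1 : 1 < a + b * √d) : 0 < a ∧ 0 < b := by
  have hy : (b * √d) ^ 2 = d * b ^ 2 := by rw [mul_pow, Real.sq_sqrt hd, mul_comm]
  have hprod : (a - b * √d) * (a + b * √d) = 1 := by linear_combination h - hy
  have hsub : 0 < a - b * √d := pos_of_mul_pos_left (hprod ▸ one_pos) (by linarith)
  have hsub1 : a - b * √d < 1 := by nlinarith
  exact ⟨by linarith, pos_of_mul_pos_left (a := b) (b := √d) (by linarith) (Real.sqrt_nonneg d)⟩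

lemma not_isOfFinOrder_of_one_lt_map {M R : Type*} [Monoid M] [Semiring R] [PartialOrder R]
    [IsStrictOrderedRing R] (f : M →* R) {x : M} (hx : 1 < f x) : ¬IsOfFinOrder x := by
  intro h
  obtain ⟨k, hk, hpow⟩ := isOfFinOrder_iff_pow_eq_one.1 h
  have := congrArg f hpow
  rw [map_pow, map_one] at this
  exact (one_lt_pow₀ hx hk.ne').ne' this

lemma Units.not_isSquare_val_of_forall_eq_zpow {R : Type*} [CommMonoid R] [HasDistribNeg R]
    {ε : Rˣ} (hε : ¬IsOfFinOrder ε) (hfund : ∀ u : Rˣ, ∃ n : ℤ, u = ε ^ n ∨ u = -ε ^ n) :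
    ¬IsSquare (ε : R) := by
  rintro ⟨η, hη⟩
  have hη' : IsUnit η := isUnit_of_mul_isUnit_left (hη ▸ ε.isUnit)
  have hsq : hη'.unit * hη'.unit = ε := Units.ext (by simp [hη])
  obtain ⟨n, hn⟩ := hfund hη'.unit
  have h2n : ε ^ (n + n) = ε ^ (1 : ℤ) := by
    rcases hn with hn | hn <;> simpa [hn, zpow_add] using hsq
  have := injective_zpow_iff_not_isOfFinOrder.2 hε h2n
  omega

lemma Module.Basis.repr_mul_basis_one {R S : Type*} [CommRing R] [CommRing S] [Algebra R S]
    {b : Module.Basis (Fin 2) R S} {d : R} (hb0 : b 0 = 1) (hb1 : b 1 ^ 2 = algebraMap R S d)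
    (x : S) : b.repr (x * b 1) 0 = d * b.repr x 1 ∧ b.repr (x * b 1) 1 = b.repr x 0 := by
  have hx : x * b 1 = (d * b.repr x 1) • b 0 + b.repr x 0 • b 1 := by
    conv_lhs => rw [← b.sum_repr x]
    simp only [Fin.sum_univ_two, hb0, Algebra.smul_def, map_mul]
    linear_combination algebraMap R S (b.repr x 1) * hb1
  simp [hx]

lemma Algebra.norm_eq_of_basis_fin_two {R S : Type*} [CommRing R] [CommRing S] [Algebra R S]
    {b : Module.Basis (Fin 2) R S} {d : R} (hb0 : b 0 = 1) (hb1 : b 1 ^ 2 = algebraMap R S d)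
    (x : S) : Algebra.norm R x = b.repr x 0 ^ 2 - d * b.repr x 1 ^ 2 := by
  rw [Algebra.norm_eq_matrix_det b, Matrix.det_fin_two]
  simp only [Algebra.leftMulMatrix_eq_repr_mul, hb0, mul_one, b.repr_mul_basis_one hb0 hb1]
  ring

lemma IntermediateField.exists_basis_one_gen_of_sq_eq {F E : Type*} [Field F] [Field E]
    [Algebra F E] {α : E} {d : F} (hα : α ^ 2 = algebraMap F E d) (hd : ∀ c : F, c ^ 2 ≠ d) :
    ∃ b : Module.Basis (Fin 2) F F⟮α⟯, b 0 = 1 ∧ b 1 = AdjoinSimple.gen F α := by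
  have hroot : aeval α (X ^ 2 - C d) = 0 := by simp [hα]
  have hmonic : (X ^ 2 - C d).Monic := monic_X_pow_sub_C d two_ne_zero
  have hint : IsIntegral F α := ⟨_, hmonic, hroot⟩
  have hmin : minpoly F α = X ^ 2 - C d :=
    (minpoly.eq_of_irreducible_of_monic (X_pow_sub_C_irreducible_of_prime Nat.prime_two hd)
      hroot hmonic).symm
  let pb := adjoin.powerBasis hint
  have hdim : pb.dim = 2 := by rw [adjoin.powerBasis_dim, hmin, natDegree_X_pow_sub_C]
  refine ⟨pb.basis.reindex (finCongr hdim), ?_, ?_⟩ <;> simp [pb]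

section SqrtField

variable {q : ℕ}

lemma exists_basis_one_sqrt (hq : Irrational √(q : ℝ)) :
    ∃ b : Module.Basis (Fin 2) ℚ ℚ⟮√(q : ℝ)⟯, b 0 = 1 ∧ ((b 1 : ℚ⟮√(q : ℝ)⟯) : ℝ) = √q := by
  have hd (c : ℚ) : c ^ 2 ≠ q := fun hc ↦
    hq ⟨|c|, by rw [Rat.cast_abs, ← Real.sqrt_sq_eq_abs, ← Rat.cast_pow, hc, Rat.cast_natCast]⟩
  obtain ⟨b, hb0, hb1⟩ := exists_basis_one_gen_of_sq_eq (F := ℚ) (α := √(q : ℝ)) (d := q)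
    (by simp) hd
  exact ⟨b, hb0, by simp [hb1]⟩

lemma exists_coe_eq_add_mul_sqrt (hq : Irrational √(q : ℝ)) (x : ℚ⟮√(q : ℝ)⟯) :
    ∃ a c : ℚ, (x : ℝ) = a + c * √q := by
  obtain ⟨b, hb0, hb1⟩ := exists_basis_one_sqrt hq
  refine ⟨b.repr x 0, b.repr x 1, ?_⟩
  conv_lhs => rw [← b.sum_repr x]
  simp [Fin.sum_univ_two, hb0, hb1, Rat.smul_def]

lemma norm_eq_sq_sub_mul_sq_of_coe_eq (hq : Irrational √(q : ℝ)) {x : ℚ⟮√(q : ℝ)⟯} {a c : ℚ}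
    (h : (x : ℝ) = a + c * √q) : Algebra.norm ℚ x = a ^ 2 - q * c ^ 2 := by
  obtain ⟨b, hb0, hb1⟩ := exists_basis_one_sqrt hq
  have hx : x = a • b 0 + c • b 1 := Subtype.ext (by simp [h, hb0, hb1, Rat.smul_def])
  have hsq : b 1 ^ 2 = algebraMap ℚ _ (q : ℚ) := Subtype.ext (by simp [hb1])
  rw [Algebra.norm_eq_of_basis_fin_two hb0 hsq]
  simp [hx]

namespace NumberField.RingOfIntegers

lemma exists_coe_eq_intCast_add_mul_sqrt (s r : ℤ) :
    ∃ η : 𝓞 ℚ⟮√(q : ℝ)⟯, ((η : ℚ⟮√(q : ℝ)⟯) : ℝ) = s + r * √q := by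
  have hint : IsIntegral ℤ (AdjoinSimple.gen ℚ √(q : ℝ)) :=
    ⟨X ^ 2 - C (q : ℤ), monic_X_pow_sub_C _ two_ne_zero, Subtype.ext (by simp)⟩
  let g : 𝓞 ℚ⟮√(q : ℝ)⟯ := ⟨_, hint⟩
  have hg : ((g : ℚ⟮√(q : ℝ)⟯) : ℝ) = √q := AdjoinSimple.coe_gen ℚ _
  exact ⟨s + r * g, by push_cast [hg]; rfl⟩

lemma isSquare_of_coe_eq {x : 𝓞 ℚ⟮√(q : ℝ)⟯} {A B s r : ℤ}
    (hx : ((x : ℚ⟮√(q : ℝ)⟯) : ℝ) = A + B * √q) (hA : s ^ 2 + q * r ^ 2 = A)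
    (hB : 2 * s * r = B) : IsSquare x := by
  obtain ⟨η, hη⟩ := exists_coe_eq_intCast_add_mul_sqrt (q := q) s r
  refine ⟨η, (algebraMap _ ℝ).injective.comp coe_injective ?_⟩
  change ((x : ℚ⟮√(q : ℝ)⟯) : ℝ) = (((η * η : 𝓞 ℚ⟮√(q : ℝ)⟯) : ℚ⟮√(q : ℝ)⟯) : ℝ)
  have hAR : (s : ℝ) ^ 2 + q * r ^ 2 = A := by exact_mod_cast hA
  have hBR : 2 * (s : ℝ) * r = B := by exact_mod_cast hB
  push_cast [hx, hη]
  linear_combination -(r : ℝ) ^ 2 * Real.sq_sqrt (Nat.cast_nonneg q) - hAR - √q * hBR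

variable [NumberField ℚ⟮√(q : ℝ)⟯]

lemma coe_norm_eq_sq_sub_mul_sq (hq : Irrational √(q : ℝ)) {x : 𝓞 ℚ⟮√(q : ℝ)⟯} {a c : ℚ}
    (h : ((x : ℚ⟮√(q : ℝ)⟯) : ℝ) = a + c * √q) :
    (Algebra.norm ℤ x : ℚ) = a ^ 2 - q * c ^ 2 := by
  rw [Algebra.coe_norm_int, norm_eq_sq_sub_mul_sq_of_coe_eq hq h]

lemma exists_intCast_eq_two_mul (hq : q.Prime) {x : 𝓞 ℚ⟮√(q : ℝ)⟯} {a c : ℚ}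
    (h : ((x : ℚ⟮√(q : ℝ)⟯) : ℝ) = a + c * √q) :
    ∃ T E : ℤ, (T : ℚ) = 2 * a ∧ (E : ℚ) = 2 * c ∧ T ^ 2 - q * E ^ 2 = 4 * Algebra.norm ℤ x := by
  have hN := coe_norm_eq_sq_sub_mul_sq hq.irrational_sqrt h
  have hN1 := coe_norm_eq_sq_sub_mul_sq hq.irrational_sqrt (x := x + 1) (a := a + 1) (c := c)
    (by push_cast [h]; ring)
  -- the trace `2a` is `N(x + 1) - N(x) - 1`
  set T := Algebra.norm ℤ (x + 1) - Algebra.norm ℤ x - 1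
  have hT : (T : ℚ) = 2 * a := by push_cast [T, hN, hN1]; ring
  obtain ⟨E, hE⟩ := Rat.exists_intCast_eq_of_squarefree_mul_sq
    (Nat.prime_iff_prime_int.1 hq).squarefree (m := T ^ 2 - 4 * Algebra.norm ℤ x) (r := 2 * c)
    (by push_cast; rw [hT, hN]; ring)
  refine ⟨T, E, hT, hE, ?_⟩
  exact_mod_cast (show (T : ℚ) ^ 2 - q * E ^ 2 = 4 * Algebra.norm ℤ x by rw [hT, hE, hN]; ring)

lemma norm_unit_eq_one_and_exists_coe_eq (hq : q.Prime) (hq4 : q % 4 = 3)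
    (u : (𝓞 ℚ⟮√(q : ℝ)⟯)ˣ) : Algebra.norm ℤ (u : 𝓞 ℚ⟮√(q : ℝ)⟯) = 1 ∧
      ∃ A B : ℤ, (((u : 𝓞 ℚ⟮√(q : ℝ)⟯) : ℚ⟮√(q : ℝ)⟯) : ℝ) = A + B * √q ∧
        A ^ 2 - q * B ^ 2 = 1 := by
  obtain ⟨a, c, h⟩ := exists_coe_eq_add_mul_sqrt hq.irrational_sqrt (u : ℚ⟮√(q : ℝ)⟯)
  obtain ⟨T, E, hT, hE, hTE⟩ := exists_intCast_eq_two_mul hq h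
  obtain ⟨hN, ⟨A, rfl⟩, ⟨B, rfl⟩⟩ := Int.eq_one_and_even_of_sq_sub_mul_sq_eq_four_mul
    (by omega) hTE (Int.isUnit_iff.1 (u.isUnit.map _))
  push_cast at hT hE
  refine ⟨hN, A, B, by simp [h, show a = A by linarith, show c = B by linarith], ?_⟩
  exact mul_left_cancel₀ four_ne_zero (by linear_combination hTE + 4 * hN)

lemma norm_add_one_eq (hq : Irrational √(q : ℝ)) {x : 𝓞 ℚ⟮√(q : ℝ)⟯} {A B : ℤ}
    (hx : ((x : ℚ⟮√(q : ℝ)⟯) : ℝ) = A + B * √q) (hAB : A ^ 2 - q * B ^ 2 = 1) :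
    Algebra.norm ℤ (x + 1) = 2 * (A + 1) := by
  have hN := coe_norm_eq_sq_sub_mul_sq hq (x := x + 1) (a := A + 1) (c := B)
    (by push_cast [hx]; ring)
  have hABQ : (A : ℚ) ^ 2 - q * B ^ 2 = 1 := by exact_mod_cast hAB
  exact_mod_cast (show (Algebra.norm ℤ (x + 1) : ℚ) = 2 * (A + 1) by
    rw [hN]; linear_combination hABQ)

end NumberField.RingOfIntegers

end SqrtField

/-- If `q` is a prime with `q ≡ 7 (mod 8)`, then the fundamental unit `ε` of `ℚ(√q)` has
norm `+1` and the squarefree part of `Norm(ε+1)` equals `2`. -/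
theorem m_eq_two_of_prime_seven_mod_eight
    (q : ℕ) (hq : q.Prime) (hq8 : q % 8 = 7)
    (K : IntermediateField ℚ ℝ) (hK : K = ℚ⟮(Real.sqrt q)⟯) [NumberField K]
    (ε : (𝓞 K)ˣ)
    (hfund : ∀ u : (𝓞 K)ˣ, ∃ n : ℤ, u = ε ^ n ∨ u = -ε ^ n)
    (hpos : 1 < (((ε : 𝓞 K) : K) : ℝ)) :
    Algebra.norm ℤ (ε : 𝓞 K) = 1 ∧
      ∃ s : ℤ, Algebra.norm ℤ ((ε : 𝓞 K) + 1) = 2 * s ^ 2 := by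
  subst hK
  obtain ⟨hnorm, A, B, hε, hAB⟩ := RingOfIntegers.norm_unit_eq_one_and_exists_coe_eq hq (by omega) ε
  obtain ⟨hA, hB⟩ : 0 < A ∧ 0 < B := by
    exact_mod_cast pos_and_pos_of_sq_sub_mul_sq_eq_one (Nat.cast_nonneg q)
      (by exact_mod_cast hAB) (hε ▸ hpos)
  refine ⟨hnorm, ?_⟩
  rcases Int.exists_add_one_eq_sq_or_exists_sq_add_mul_sq (Nat.prime_iff_prime_int.1 hq)
    (by omega) hA hB.ne' hAB with ⟨s, hs⟩ | ⟨s, r, hsA, hsB⟩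
  · exact ⟨s, by rw [RingOfIntegers.norm_add_one_eq hq.irrational_sqrt hε hAB, hs]⟩
  · have hε_inf : ¬IsOfFinOrder ε := not_isOfFinOrder_of_one_lt_map
      (((algebraMap ℚ⟮√(q : ℝ)⟯ ℝ).comp (algebraMap _ _)).toMonoidHom.comp (Units.coeHom _)) hpos
    exact absurd (RingOfIntegers.isSquare_of_coe_eq hε hsA hsB)
      (Units.not_isSquare_val_of_forall_eq_zpow hε_inf hfund)
end

section
/- Let q₁, q₂ be distinct primes with q₁ ≡ q₂ ≡ 3 (mod 4), and let m be the squarefree-part invariant of the fundamental unit of ℚ(√(q₁q₂)) (so m ∈ {q₁, q₂}). Then m = q₁ if and only if q₁ is a quadratic residue mod q₂, and m = q₂ if and only if q₁ is a non-residue mod q₂. -/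
/-!
Write the fundamental unit as `ε = (x + y√d) / 2` with `x, y ∈ ℤ` and `d = q₁q₂`. Since `-1` is
not a square modulo `q₁`, `N(ε) = 1`; hence `x² - dy² = 4`, `N(ε + 1) = x + 2` and
`(ε + 1)² = (x + 2)ε`. As `ε` is not a square in `K`, `x + 2` is neither a square nor `d` times a
square. Comparing `p`-adic valuations in `(x + 2)(x - 2) = dy²` (and, for `p = 2`, using
`d ≡ 1 mod 4`) shows that the squarefree part `m` of `x + 2` divides `d`, so `m ∈ {q₁, q₂}`.
If `m = q₁`, then `s²(x - 2) = q₂y²` forces `x ≡ 2 mod q₂`, so `q₁s² ≡ 4 mod q₂` and `q₁` is a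
square mod `q₂`; symmetrically for `m = q₂`, where quadratic reciprocity for two primes
`≡ 3 mod 4` turns this into `q₁` being a non-residue mod `q₂`.
-/

open Polynomial IntermediateField NumberField

theorem Algebra.norm_algebraMap_add_algebraMap_mul {R S : Type*} [CommRing R] [CommRing S]
    [Algebra R S] (B : Module.Basis (Fin 2) R S) (hB0 : B 0 = 1) {d : R}
    (hB1 : B 1 * B 1 = algebraMap R S d) (a b : R) :
    Algebra.norm R (algebraMap R S a + algebraMap R S b * B 1) = a ^ 2 - d * b ^ 2 := by
  have repr_eq (c₀ c₁ : R) (i : Fin 2) :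
      B.repr (algebraMap R S c₀ + algebraMap R S c₁ * B 1) i = ![c₀, c₁] i := by
    rw [Algebra.algebraMap_eq_smul_one c₀, ← Algebra.smul_def, ← hB0]
    fin_cases i <;> simp
  have mul_B1 : (algebraMap R S a + algebraMap R S b * B 1) * B 1
      = algebraMap R S (d * b) + algebraMap R S a * B 1 := by
    rw [map_mul, ← hB1]; ring
  rw [Algebra.norm_eq_matrix_det B, Matrix.det_fin_two]
  simp only [Algebra.leftMulMatrix_eq_repr_mul, hB0, mul_one, mul_B1, repr_eq,
    Matrix.cons_val_zero, Matrix.cons_val_one]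
  ring

lemma Rat.exists_int_eq_of_squarefree_mul_sq {D : ℤ} (hD : Squarefree D) {r : ℚ} {M : ℤ}
    (h : D * r ^ 2 = M) : ∃ y : ℤ, y = r := by
  have hden : (r.den : ℤ) ^ 2 ∣ D := by
    have hcop : IsCoprime ((r.den : ℤ) ^ 2) (r.num ^ 2) :=
      (Int.isCoprime_iff_gcd_eq_one.2 (by simpa [Int.gcd, Nat.coprime_comm] using r.reduced)).pow
    refine hcop.dvd_of_dvd_mul_right ⟨M, ?_⟩
    rw [← Rat.num_div_den r, div_pow] at h
    field_simp at h
    exact_mod_cast h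
  have hunit : IsUnit (r.den : ℤ) := hD _ (by rwa [← sq])
  exact ⟨r.num, Rat.coe_int_num_of_den_eq_one (Nat.isUnit_iff.mp (Int.ofNat_isUnit.mp hunit))⟩

lemma isSquare_of_add_one_sq_eq_mul {F : Type*} [Field F] {ε t : F} (ht : t ≠ 0)
    (h : (ε + 1) ^ 2 = t * ε) (hsq : IsSquare t) : IsSquare ε := by
  obtain ⟨c, rfl⟩ := hsq
  have hc : c ≠ 0 := by rintro rfl; simp at ht
  exact ⟨(ε + 1) / c, by field_simp; linear_combination -h⟩

def IsFundamentalUnit {F : Type*} [Field F] (ε : (𝓞 F)ˣ) : Prop :=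
  ∀ u : (𝓞 F)ˣ, ∃ n : ℤ, u = ε ^ n ∨ u = -ε ^ n

lemma IsFundamentalUnit.not_isSquare {F : Type*} [Field F] {ε : (𝓞 F)ˣ}
    (hfund : IsFundamentalUnit ε) (hε : ∀ k : ℤ, ε ^ k = 1 → k = 0) :
    ¬ IsSquare ((ε : 𝓞 F) : F) := by
  rintro ⟨η, hη⟩
  have hint : IsIntegral ℤ η := IsIntegral.of_pow two_pos (sq η ▸ hη ▸ (ε : 𝓞 F).isIntegral_coe)
  set η₀ : 𝓞 F := ⟨η, hint⟩
  have hη₀ : η₀ * η₀ = ε := RingOfIntegers.ext hη.symm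
  obtain ⟨u, hu⟩ : IsUnit η₀ := isUnit_of_mul_isUnit_left (hη₀ ▸ ε.isUnit)
  have hu2 : u ^ 2 = ε := Units.ext (by simp [sq, hu, hη₀])
  obtain ⟨n, hn⟩ := hfund u
  have hsq : (ε ^ n) ^ 2 = ε := by
    rcases hn with rfl | rfl
    · exact hu2
    · rwa [neg_sq] at hu2
  have h2n : ε ^ (2 * n - 1) = 1 := by
    rw [zpow_sub_one, mul_comm 2 n, zpow_mul, zpow_ofNat, hsq, mul_inv_cancel]
  have := hε _ h2n
  omega

lemma IntermediateField.zpow_eq_one_of_one_lt {K : IntermediateField ℚ ℝ} (ε : (𝓞 K)ˣ)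
    (hε : 1 < (((ε : 𝓞 K) : K) : ℝ)) (k : ℤ) (h : ε ^ k = 1) : k = 0 := by
  let φ : (𝓞 K)ˣ →* ℝˣ := Units.map ((algebraMap K ℝ).comp (algebraMap (𝓞 K) K) : 𝓞 K →* ℝ)
  have hk : ((φ ε : ℝˣ) : ℝ) ^ k = 1 := by
    rw [← Units.val_zpow_eq_zpow_val, ← map_zpow, h, map_one, Units.val_one]
  exact zpow_right_injective₀ (by linarith) hε.ne' (hk.trans (zpow_zero _).symm)

lemma IntermediateField.two_lt_of_add_one_sq_eq_mul {K : IntermediateField ℚ ℝ} {θ : K}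
    (hθ : 1 < (θ : ℝ)) {x : ℤ} (h : (θ + 1) ^ 2 = (x + 2) * θ) : 2 < x := by
  have hR := congrArg (algebraMap K ℝ) h
  simp only [map_add, map_mul, map_pow, map_one, map_intCast, map_ofNat,
    IntermediateField.algebraMap_apply] at hR
  have : (2 : ℝ) < x := by nlinarith
  exact_mod_cast this

lemma Int.prime_dvd_of_squarefree_mul_sq_mul_eq {p : ℕ} (hp : p.Prime) {m s v D y : ℤ}
    (hm : Squarefree m) (hpm : (p : ℤ) ∣ m) (hpD : ¬ (p : ℤ) ∣ D) (hs : s ≠ 0)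
    (h : m * s ^ 2 * v = D * y ^ 2) : (p : ℤ) ∣ v := by
  have := Fact.mk hp
  by_contra hpv
  have hv : v ≠ 0 := by rintro rfl; simp at hpv
  have hD : D ≠ 0 := by rintro rfl; simp at hpD
  have hy : y ≠ 0 := by rintro rfl; simp [hm.ne_zero, hs, hv] at h
  have hvm : padicValInt p m = 1 := by
    have h1 := ((padicValInt_dvd_iff 1 m).1 (by simpa using hpm)).resolve_left hm.ne_zero
    have h2 : ¬ (p : ℤ) ^ 2 ∣ m := fun h2 =>
      hp.not_isUnit (Int.ofNat_isUnit.1 (hm _ (by rwa [← sq])))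
    rw [padicValInt_dvd_iff, not_or] at h2
    omega
  have hval := congrArg (padicValInt p) h
  rw [padicValInt.mul (mul_ne_zero hm.ne_zero (pow_ne_zero 2 hs)) hv,
    padicValInt.mul hm.ne_zero (pow_ne_zero 2 hs), padicValInt.mul hD (pow_ne_zero 2 hy), hvm,
    padicValInt.eq_zero_of_not_dvd hpv, padicValInt.eq_zero_of_not_dvd hpD, sq, sq,
    padicValInt.mul hs hs, padicValInt.mul hy hy] at hval
  omega

lemma Int.sq_sub_mul_sq_ne_neg_four {q : ℕ} (hq : q.Prime) (hq4 : q % 4 = 3) {d : ℤ}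
    (hqd : (q : ℤ) ∣ d) (x y : ℤ) : x ^ 2 - d * y ^ 2 ≠ -4 := by
  intro h
  have := Fact.mk hq
  obtain ⟨e, rfl⟩ := hqd
  have h2 : (2 : ZMod q) ≠ 0 := Ring.two_ne_zero (by rw [ZMod.ringChar_zmod_n]; omega)
  have hx : (x : ZMod q) ^ 2 = -4 := by
    simpa using congrArg (Int.cast : ℤ → ZMod q) h
  refine ZMod.exists_sq_eq_neg_one_iff.1 ⟨(x : ZMod q) / 2, ?_⟩ hq4
  field_simp
  linear_combination -hx

lemma Int.sq_sub_mul_sq_ne_four_of_four_dvd {d x : ℤ} (hd : d % 4 = 1) (hx : 4 ∣ x) (y : ℤ) :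
    x ^ 2 - d * y ^ 2 ≠ 4 := by
  obtain ⟨k, rfl⟩ := hx
  obtain ⟨e, rfl⟩ : ∃ e, d = 4 * e + 1 := ⟨d / 4, by omega⟩
  intro h
  have mod_sixteen : ∀ k e y : ZMod 16, (4 * k) ^ 2 - (4 * e + 1) * y ^ 2 ≠ 4 := by decide
  exact mod_sixteen k e y (by exact_mod_cast congrArg (Int.cast : ℤ → ZMod 16) h)

lemma Int.not_two_dvd_of_squarefree_mul_sq_eq_add_two {d m s x y : ℤ} (hd : d % 4 = 1)
    (hm : Squarefree m) (hs : s ≠ 0) (hms : m * s ^ 2 = x + 2) (h : x ^ 2 - d * y ^ 2 = 4) :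
    ¬ (2 : ℤ) ∣ m := by
  rintro ⟨m', rfl⟩
  obtain ⟨k, rfl⟩ : ∃ k, m' = 2 * k + 1 := by
    refine Int.odd_iff.2 (Int.emod_two_ne_zero.1 fun hk => ?_)
    exact absurd (Int.isUnit_iff.1 (hm 2 ⟨m' / 2, by omega⟩)) (by norm_num)
  -- For even `s` the 2-adic valuation of `(x + 2)(x - 2) = dy²` is odd; for odd `s`, `4 ∣ x`.
  rcases Int.even_or_odd' s with ⟨σ, rfl | rfl⟩
  · have hw : (2 : ℤ) ∣ 2 * ((2 * k + 1) * σ ^ 2) - 1 :=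
      Int.prime_dvd_of_squarefree_mul_sq_mul_eq (s := 4 * σ) (D := d) (y := y) Nat.prime_two hm
        (dvd_mul_right 2 _) (by omega) (by omega)
        (by linear_combination (2 * (2 * k + 1) * (2 * σ) ^ 2 + x - 2) * hms + h)
    generalize (2 * k + 1) * σ ^ 2 = t at hw
    omega
  · exact Int.sq_sub_mul_sq_ne_four_of_four_dvd hd
      ⟨2 * (2 * k + 1) * (σ ^ 2 + σ) + k, by linear_combination -hms⟩ y h

lemma Int.prime_dvd_of_squarefree_mul_sq_eq_add_two {d m s x y : ℤ} (hd : d % 4 = 1)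
    (hm : Squarefree m) (hs : s ≠ 0) (hms : m * s ^ 2 = x + 2) (h : x ^ 2 - d * y ^ 2 = 4)
    {p : ℕ} (hp : p.Prime) (hpm : (p : ℤ) ∣ m) : (p : ℤ) ∣ d := by
  by_contra hpd
  have hpx : (p : ℤ) ∣ x - 2 :=
    Int.prime_dvd_of_squarefree_mul_sq_mul_eq (y := y) hp hm hpm hpd hs
      (by linear_combination (x - 2) * hms + h)
  have hp4 : p ∣ 2 ^ 2 := by
    have := dvd_sub (hpm.trans ⟨s ^ 2, hms.symm⟩) hpx
    exact Int.natCast_dvd_natCast.1 (by simpa using this)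
  obtain rfl := (Nat.prime_dvd_prime_iff_eq hp Nat.prime_two).1 (hp.dvd_of_dvd_pow hp4)
  exact Int.not_two_dvd_of_squarefree_mul_sq_eq_add_two hd hm hs hms h hpm

lemma Int.dvd_of_squarefree_of_forall_prime_dvd {m n : ℤ} (hm : Squarefree m) (hn : n ≠ 0)
    (h : ∀ p : ℕ, p.Prime → (p : ℤ) ∣ m → (p : ℤ) ∣ n) : m ∣ n := by
  rw [← Int.natAbs_dvd_natAbs, ← Nat.prod_primeFactors_of_squarefree (Int.squarefree_natAbs.2 hm),
    Nat.prod_primeFactors_dvd_iff (Int.natAbs_ne_zero.2 hn)]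
  intro p hp
  rw [Nat.mem_primeFactors] at hp ⊢
  exact ⟨hp.1, Int.natCast_dvd.1 (h p hp.1 (Int.natCast_dvd.2 hp.2.1)), Int.natAbs_ne_zero.2 hn⟩

lemma Int.eq_one_or_eq_or_eq_or_eq_mul_of_dvd_mul {q₁ q₂ : ℕ} (hq₁ : q₁.Prime) (hq₂ : q₂.Prime)
    {m : ℤ} (hm : 0 < m) (h : m ∣ q₁ * q₂) : m = 1 ∨ m = q₁ ∨ m = q₂ ∨ m = q₁ * q₂ := by
  lift m to ℕ using hm.le
  obtain ⟨a, b, ha, hb, rfl⟩ := Nat.dvd_mul.1 (Int.natCast_dvd_natCast.1 (by exact_mod_cast h))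
  rcases (Nat.dvd_prime hq₁).1 ha with rfl | rfl <;>
    rcases (Nat.dvd_prime hq₂).1 hb with rfl | rfl <;> simp

lemma Int.eq_or_eq_of_squarefree_mul_sq_eq_add_two {q₁ q₂ : ℕ} (hq₁ : q₁.Prime) (hq₂ : q₂.Prime)
    (hq₁4 : q₁ % 4 = 3) (hq₂4 : q₂ % 4 = 3) {m s x y : ℤ} (hm : Squarefree m) (hx : 2 < x)
    (hms : m * s ^ 2 = x + 2) (h : x ^ 2 - q₁ * q₂ * y ^ 2 = 4) (h1 : m ≠ 1)
    (hd : m ≠ q₁ * q₂) : m = q₁ ∨ m = q₂ := by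
  have hs : s ≠ 0 := by rintro rfl; omega
  have hm0 : 0 < m := by nlinarith [sq_nonneg s]
  have hd4 : ((q₁ : ℤ) * q₂) % 4 = 1 := by
    rw [Int.mul_emod, show (q₁ : ℤ) % 4 = 3 by omega, show (q₂ : ℤ) % 4 = 3 by omega]
    rfl
  have hdvd : m ∣ q₁ * q₂ :=
    Int.dvd_of_squarefree_of_forall_prime_dvd hm (by simp [hq₁.ne_zero, hq₂.ne_zero])
      fun p hp hpm => Int.prime_dvd_of_squarefree_mul_sq_eq_add_two hd4 hm hs hms h hp hpm
  rcases Int.eq_one_or_eq_or_eq_or_eq_mul_of_dvd_mul hq₁ hq₂ hm0 hdvd with h' | h' | h' | h' <;>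
    tauto

lemma Int.isSquare_of_mul_sq_eq_add_two {q : ℕ} (hq : q.Prime) (hq2 : q ≠ 2) {a s x y : ℤ}
    (ha : a ≠ 0) (hy : y ≠ 0) (hs : a * s ^ 2 = x + 2) (h : x ^ 2 - a * q * y ^ 2 = 4) :
    IsSquare (a : ZMod q) := by
  have := Fact.mk hq
  have hkey : s ^ 2 * (x - 2) = q * y ^ 2 :=
    mul_left_cancel₀ ha (by linear_combination (x - 2) * hs + h)
  have hqx : (q : ℤ) ∣ x - 2 := by
    by_contra hqx
    have hq1 : (q : ℤ) ∣ 1 :=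
      Int.prime_dvd_of_squarefree_mul_sq_mul_eq (v := 1) (y := s) hq
        (Nat.prime_iff_prime_int.1 hq).irreducible.squarefree dvd_rfl hqx hy
        (by linear_combination -hkey)
    exact hq.one_lt.ne' (by exact_mod_cast Int.eq_one_of_dvd_one (by positivity) hq1)
  have hx : (x : ZMod q) = 2 := by
    have := (ZMod.intCast_zmod_eq_zero_iff_dvd _ q).2 hqx
    push_cast at this
    linear_combination this
  have has : (a : ZMod q) * s ^ 2 = 2 ^ 2 := by
    have := congrArg (Int.cast : ℤ → ZMod q) hs
    push_cast at this
    linear_combination this + hx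
  have h2 : (2 : ZMod q) ≠ 0 := Ring.two_ne_zero (by rwa [ZMod.ringChar_zmod_n])
  have hs0 : (s : ZMod q) ≠ 0 := by
    rintro h0
    rw [h0, zero_pow two_ne_zero, mul_zero] at has
    exact pow_ne_zero 2 h2 has.symm
  exact ⟨2 / s, by field_simp; linear_combination has⟩

theorem Int.eq_iff_isSquare_of_squarefree_mul_sq_eq_add_two {q₁ q₂ : ℕ} (hq₁ : q₁.Prime)
    (hq₂ : q₂.Prime) (hne : q₁ ≠ q₂) (hq₁4 : q₁ % 4 = 3) (hq₂4 : q₂ % 4 = 3) {m s x y : ℤ}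
    (hm : Squarefree m) (hx : 2 < x) (hms : m * s ^ 2 = x + 2) (h : x ^ 2 - q₁ * q₂ * y ^ 2 = 4)
    (h1 : m ≠ 1) (hd : m ≠ q₁ * q₂) :
    (m = q₁ ↔ IsSquare (q₁ : ZMod q₂)) ∧ (m = q₂ ↔ ¬ IsSquare (q₁ : ZMod q₂)) := by
  have hy : y ≠ 0 := by rintro rfl; nlinarith
  have hres₁ : m = q₁ → IsSquare (q₁ : ZMod q₂) := by
    rintro rfl
    exact_mod_cast Int.isSquare_of_mul_sq_eq_add_two hq₂ (by omega) (by simp [hq₁.ne_zero]) hy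
      hms h
  have hres₂ : m = q₂ → ¬ IsSquare (q₁ : ZMod q₂) := by
    rintro rfl
    have := Fact.mk hq₁
    have := Fact.mk hq₂
    refine (ZMod.exists_sq_eq_prime_iff_of_mod_four_eq_three hq₁4 hq₂4 hne).1 ?_
    exact_mod_cast Int.isSquare_of_mul_sq_eq_add_two hq₁ (by omega) (by simp [hq₂.ne_zero]) hy
      hms (by linear_combination h)
  rcases Int.eq_or_eq_of_squarefree_mul_sq_eq_add_two hq₁ hq₂ hq₁4 hq₂4 hm hx hms h h1 hd
    with h' | h' <;> tauto

namespace AdjoinSqrt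

variable {d : ℕ}

lemma minpoly_eq (hd : ¬ IsSquare d) : minpoly ℚ √(d : ℝ) = X ^ 2 - C (d : ℚ) := by
  refine (minpoly.eq_of_irreducible_of_monic ?_ (by simp) (monic_X_pow_sub_C _ two_ne_zero)).symm
  refine X_pow_sub_C_irreducible_of_prime Nat.prime_two fun r hr => hd ?_
  exact Rat.isSquare_natCast_iff.1 ⟨r, by rw [← hr, sq]⟩

lemma exists_basis (hd : ¬ IsSquare d) :
    ∃ B : Module.Basis (Fin 2) ℚ ℚ⟮√(d : ℝ)⟯, B 0 = 1 ∧ B 1 = AdjoinSimple.gen ℚ √(d : ℝ) := by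
  have hint : IsIntegral ℚ √(d : ℝ) :=
    ⟨X ^ 2 - C (d : ℚ), monic_X_pow_sub_C _ two_ne_zero, by simp⟩
  have hdim : (adjoin.powerBasis hint).dim = 2 := by
    rw [adjoin.powerBasis_dim, minpoly_eq hd, natDegree_X_pow_sub_C]
  exact ⟨(adjoin.powerBasis hint).basis.reindex (finCongr hdim), by simp, by simp⟩

lemma gen_mul_gen :
    AdjoinSimple.gen ℚ √(d : ℝ) * AdjoinSimple.gen ℚ √(d : ℝ) = (d : ℚ⟮√(d : ℝ)⟯) := by
  ext; simp

lemma exists_eq_add_mul_gen (hd : ¬ IsSquare d) (θ : ℚ⟮√(d : ℝ)⟯) :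
    ∃ a b : ℚ, θ = a + b * AdjoinSimple.gen ℚ √(d : ℝ) := by
  obtain ⟨B, hB0, hB1⟩ := exists_basis hd
  refine ⟨B.repr θ 0, B.repr θ 1, ?_⟩
  conv_lhs => rw [← B.sum_repr θ]
  simp [Fin.sum_univ_two, hB0, hB1, Algebra.smul_def]

lemma norm_add_mul_gen (hd : ¬ IsSquare d) (a b : ℚ) :
    Algebra.norm ℚ ((a : ℚ⟮√(d : ℝ)⟯) + b * AdjoinSimple.gen ℚ √(d : ℝ)) = a ^ 2 - d * b ^ 2 := by
  obtain ⟨B, hB0, hB1⟩ := exists_basis hd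
  simpa [hB1] using Algebra.norm_algebraMap_add_algebraMap_mul B hB0 (d := d)
    (by rw [hB1, gen_mul_gen]; simp) a b

lemma add_one_sq_eq_mul (θ : ℚ⟮√(d : ℝ)⟯) {x y : ℤ} (hθ : 2 * (θ : ℝ) = x + y * √(d : ℝ))
    (h : x ^ 2 - d * y ^ 2 = 4) : (θ + 1) ^ 2 = (x + 2) * θ := by
  have hr : √(d : ℝ) ^ 2 = d := Real.sq_sqrt d.cast_nonneg
  have hR : ((x ^ 2 - d * y ^ 2 : ℤ) : ℝ) = 4 := by exact_mod_cast h
  push_cast at hR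
  apply (algebraMap ℚ⟮√(d : ℝ)⟯ ℝ).injective
  simp only [map_add, map_mul, map_pow, map_one, map_intCast, map_ofNat,
    IntermediateField.algebraMap_apply]
  linear_combination (2 * (θ : ℝ) - x + y * √(d : ℝ)) / 4 * hθ + (y : ℝ) ^ 2 / 4 * hr - hR / 4

variable [NumberField ℚ⟮√(d : ℝ)⟯]

lemma exists_int_two_mul_eq_add_mul_sqrt (hd : Squarefree d) (hd1 : d ≠ 1)
    (θ : 𝓞 ℚ⟮√(d : ℝ)⟯) :
    ∃ x y : ℤ, 2 * ((θ : ℚ⟮√(d : ℝ)⟯) : ℝ) = x + y * √(d : ℝ) ∧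
      x ^ 2 - d * y ^ 2 = 4 * Algebra.norm ℤ θ ∧
      Algebra.norm ℤ (θ + 1) = Algebra.norm ℤ θ + x + 1 := by
  have hsq : ¬ IsSquare d := fun ⟨r, hr⟩ => hd1 <| by
    simpa [hr, Nat.isUnit_iff] using hd r (hr ▸ dvd_rfl)
  obtain ⟨a, b, hθ⟩ := exists_eq_add_mul_gen hsq (θ : ℚ⟮√(d : ℝ)⟯)
  have hN : (Algebra.norm ℤ θ : ℚ) = a ^ 2 - d * b ^ 2 := by
    rw [Algebra.coe_norm_int, hθ, norm_add_mul_gen hsq]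
  have hN1 : (Algebra.norm ℤ (θ + 1) : ℚ) = (a + 1) ^ 2 - d * b ^ 2 := by
    rw [Algebra.coe_norm_int, ← norm_add_mul_gen hsq]
    push_cast [hθ]
    ring_nf
  -- `x` is the trace `2a`, read off from the norms so that its integrality is visible.
  set x := Algebra.norm ℤ (θ + 1) - Algebra.norm ℤ θ - 1
  have hx : (x : ℚ) = 2 * a := by
    simp only [x]; push_cast; linear_combination hN1 - hN
  obtain ⟨y, hy⟩ := Rat.exists_int_eq_of_squarefree_mul_sq (Int.squarefree_natCast.2 hd)
    (r := 2 * b) (M := x ^ 2 - 4 * Algebra.norm ℤ θ)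
    (by push_cast; linear_combination 4 * hN - (x + 2 * a) * hx)
  refine ⟨x, y, ?_, ?_, by ring⟩
  · have hθR : ((θ : ℚ⟮√(d : ℝ)⟯) : ℝ) = a + b * √(d : ℝ) := by simp [hθ]
    rw [hθR, show (x : ℝ) = 2 * a by exact_mod_cast hx, show (y : ℝ) = 2 * b by exact_mod_cast hy]
    ring
  · have : ((x ^ 2 - d * y ^ 2 : ℤ) : ℚ) = ((4 * Algebra.norm ℤ θ : ℤ) : ℚ) := by
      push_cast [hx, hy, hN]; ring
    exact_mod_cast this

lemma norm_unit_eq_one_of_prime_dvd (hd : Squarefree d) {q : ℕ} (hq : q.Prime)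
    (hq4 : q % 4 = 3) (hqd : q ∣ d) (u : (𝓞 ℚ⟮√(d : ℝ)⟯)ˣ) :
    Algebra.norm ℤ (u : 𝓞 ℚ⟮√(d : ℝ)⟯) = 1 := by
  obtain ⟨x, y, -, hpell, -⟩ :=
    exists_int_two_mul_eq_add_mul_sqrt hd (fun h => hq.ne_one (Nat.dvd_one.1 (h ▸ hqd))) u
  refine (Int.isUnit_iff.1 (u.isUnit.map (Algebra.norm ℤ))).resolve_right fun h => ?_
  exact Int.sq_sub_mul_sq_ne_neg_four hq hq4 (Int.natCast_dvd_natCast.2 hqd) x y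
    (by rw [hpell, h]; rfl)

lemma exists_sq_sub_mul_sq_eq_four_of_isFundamentalUnit (hd : Squarefree d) (hd1 : d ≠ 1)
    {ε : (𝓞 ℚ⟮√(d : ℝ)⟯)ˣ} (hfund : IsFundamentalUnit ε)
    (hpos : 1 < (((ε : 𝓞 ℚ⟮√(d : ℝ)⟯) : ℚ⟮√(d : ℝ)⟯) : ℝ))
    (hN : Algebra.norm ℤ (ε : 𝓞 ℚ⟮√(d : ℝ)⟯) = 1) :
    ∃ x y : ℤ, 2 < x ∧ x ^ 2 - d * y ^ 2 = 4 ∧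
      Algebra.norm ℤ ((ε : 𝓞 ℚ⟮√(d : ℝ)⟯) + 1) = x + 2 ∧
      ∀ s : ℤ, x + 2 ≠ s ^ 2 ∧ x + 2 ≠ d * s ^ 2 := by
  obtain ⟨x, y, hcoord, hpell, hnorm⟩ := exists_int_two_mul_eq_add_mul_sqrt hd hd1 ε
  rw [hN, mul_one] at hpell
  have hquad := add_one_sq_eq_mul _ hcoord hpell
  have hx := two_lt_of_add_one_sq_eq_mul hpos hquad
  have hsq : ¬ IsSquare ((x : ℚ⟮√(d : ℝ)⟯) + 2) := fun h =>
    hfund.not_isSquare (zpow_eq_one_of_one_lt ε hpos)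
      (isSquare_of_add_one_sq_eq_mul (by exact_mod_cast (by omega : x + 2 ≠ 0)) hquad h)
  refine ⟨x, y, hx, hpell, by rw [hnorm, hN]; ring, fun s => ⟨fun h => hsq ?_, fun h => hsq ?_⟩⟩
  · exact ⟨s, by exact_mod_cast h.trans (sq s)⟩
  · refine ⟨s * AdjoinSimple.gen ℚ √(d : ℝ), ?_⟩
    rw [mul_mul_mul_comm, gen_mul_gen]
    exact_mod_cast h.trans (by ring)

end AdjoinSqrt

open AdjoinSqrt in
/-- Let `q₁, q₂` be distinct primes `≡ 3 (mod 4)` and `m` the squarefree-part invariant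
of the fundamental unit of `ℚ(√(q₁q₂))`.  Then `m = q₁` iff `q₁` is a quadratic residue
mod `q₂`, and `m = q₂` iff `q₁` is a non-residue mod `q₂`. -/
theorem m_invariant_of_two_primes_three_mod_four
    (q₁ q₂ : ℕ) (hq₁ : q₁.Prime) (hq₂ : q₂.Prime) (hne : q₁ ≠ q₂)
    (hq₁4 : q₁ % 4 = 3) (hq₂4 : q₂ % 4 = 3)
    (K : IntermediateField ℚ ℝ) (hK : K = ℚ⟮(Real.sqrt (q₁ * q₂ : ℕ))⟯) [NumberField K]
    (ε : (𝓞 K)ˣ)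
    (hfund : ∀ u : (𝓞 K)ˣ, ∃ n : ℤ, u = ε ^ n ∨ u = -ε ^ n)
    (hpos : 1 < (((ε : 𝓞 K) : K) : ℝ))
    (m : ℤ) (hmsf : Squarefree m)
    (hm : ∃ s : ℤ, Algebra.norm ℤ ((ε : 𝓞 K) + 1) = m * s ^ 2) :
    (m = q₁ ↔ IsSquare ((q₁ : ZMod q₂))) ∧ (m = q₂ ↔ ¬ IsSquare ((q₁ : ZMod q₂))) := by
  obtain ⟨s, hs⟩ := hm
  subst hK
  have hd : Squarefree (q₁ * q₂) :=
    (Nat.squarefree_mul ((Nat.coprime_primes hq₁ hq₂).2 hne)).2 ⟨hq₁.squarefree, hq₂.squarefree⟩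
  obtain ⟨x, y, hx, hpell, hnorm, hns⟩ :=
    exists_sq_sub_mul_sq_eq_four_of_isFundamentalUnit hd (by simp [hq₁.ne_one]) hfund hpos
      (norm_unit_eq_one_of_prime_dvd hd hq₁ hq₁4 (dvd_mul_right _ _) ε)
  push_cast at hpell hns
  rw [hnorm] at hs
  refine Int.eq_iff_isSquare_of_squarefree_mul_sq_eq_add_two hq₁ hq₂ hne hq₁4 hq₂4 hmsf hx
    hs.symm hpell ?_ ?_
  · rintro rfl
    exact (hns s).1 (by rw [hs, one_mul])
  · rintro rfl
    exact (hns s).2 hs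
end

section
/- If n > 1 is an integer with n ≢ 2 (mod 5) and both n²+1 and (n+1)²+1 are squarefree, then N²+1 is squarefree, where N = n(n+1)+1. -/
/-!
Since `N² + 1 = (n² + 1)((n + 1)² + 1)`, it suffices that the two squarefree factors are coprime.
Any common divisor `d` of them divides their difference `2n + 1` and also
`5 = (2n + 3)(n² + 1) - (2n - 1)((n + 1)² + 1)`; as `5` is prime and `n ≢ 2 (mod 5)` means
`5 ∤ 2n + 1`, `d` is a unit.
-/

section CommRing

variable {R : Type*} [CommRing R]

theorem sq_add_one_mul_add_one_sq_add_one (a : R) :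
    (a ^ 2 + 1) * ((a + 1) ^ 2 + 1) = (a * (a + 1) + 1) ^ 2 + 1 := by
  ring

theorem isCoprime_sq_add_one_add_one_sq_add_one {a : R} (h : IsCoprime (5 : R) (2 * a + 1)) :
    IsCoprime (a ^ 2 + 1) ((a + 1) ^ 2 + 1) := by
  obtain ⟨u, v, huv⟩ := h
  exact ⟨u * (2 * a + 3) - v, v - u * (2 * a - 1), by linear_combination huv⟩

end CommRing

theorem Int.isCoprime_five_two_mul_add_one {n : ℤ} (hn5 : n % 5 ≠ 2) : IsCoprime 5 (2 * n + 1) :=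
  (Int.prime_iff_natAbs_prime.mpr (by norm_num)).coprime_iff_not_dvd.mpr (by omega)

theorem squarefree_N_sq_add_one_general (n : ℤ) (hn5 : n % 5 ≠ 2)
    (h1 : Squarefree (n ^ 2 + 1)) (h2 : Squarefree ((n + 1) ^ 2 + 1)) :
    Squarefree ((n * (n + 1) + 1) ^ 2 + 1) := by
  rw [← sq_add_one_mul_add_one_sq_add_one]
  have hcop := isCoprime_sq_add_one_add_one_sq_add_one (Int.isCoprime_five_two_mul_add_one hn5)
  exact squarefree_mul_iff.mpr ⟨hcop.isRelPrime, h1, h2⟩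

/-- If `n > 1`, `n ≢ 2 (mod 5)` and both `n²+1` and `(n+1)²+1` are squarefree, then
`N²+1` is squarefree, where `N = n(n+1)+1`. -/
theorem squarefree_N_sq_add_one (n : ℤ) (hn : 1 < n) (hn5 : n % 5 ≠ 2)
    (h1 : Squarefree (n ^ 2 + 1)) (h2 : Squarefree ((n + 1) ^ 2 + 1)) :
    Squarefree ((n * (n + 1) + 1) ^ 2 + 1) :=
  squarefree_N_sq_add_one_general n hn5 h1 h2
end

section
/- Let k be a real quadratic field with fundamental unit ε of norm +1 and let α be the totally positive integer with ε = σ(α)/α and m = Norm(α) squarefree dividing the discriminant. Then the product of the classes of the ramified primes dividing m is trivial in the strict class group of k. -/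
/-!
Since `ε = σ(α)/α`, the norm `m = α σ(α) = ε α²` is an associate of `α²`, so `(m) = (α)²`.
Square roots of ideals in a Dedekind domain are unique, hence `J = (α)`, and `α` is totally
positive.
-/

open NumberField IntermediateField Polynomial Module

section Quadratic

variable {F L : Type*} [Field F] [Field L] [Algebra F L] [FiniteDimensional F L]
  {σ : Gal(L/F)}

theorem AlgEquiv.natCard_eq_two_of_finrank_le_two (hL : finrank F L ≤ 2) (hσ : σ ≠ 1) :
    Nat.card Gal(L/F) = 2 := by
  have : Nontrivial Gal(L/F) := ⟨⟨σ, 1, hσ⟩⟩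
  refine le_antisymm ?_ Finite.one_lt_card
  exact (Nat.card_eq_fintype_card (α := Gal(L/F)) ▸ AlgEquiv.card_le).trans hL

theorem AlgEquiv.eq_of_ne_one_of_finrank_le_two (hL : finrank F L ≤ 2) (hσ : σ ≠ 1)
    {τ : Gal(L/F)} (hτ : τ ≠ 1) : τ = σ :=
  ((Nat.card_eq_two_iff' 1).mp (natCard_eq_two_of_finrank_le_two hL hσ)).unique hτ hσ

theorem IsGalois.of_finrank_le_two (hL : finrank F L ≤ 2) (hσ : σ ≠ 1) : IsGalois F L := by
  have hcard := AlgEquiv.natCard_eq_two_of_finrank_le_two hL hσ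
  refine IsGalois.of_card_aut_eq_finrank F L (le_antisymm ?_ (hcard ▸ hL))
  exact Nat.card_eq_fintype_card (α := Gal(L/F)) ▸ AlgEquiv.card_le

theorem Algebra.norm_eq_mul_of_finrank_le_two (hL : finrank F L ≤ 2) (hσ : σ ≠ 1) (x : L) :
    algebraMap F L (Algebra.norm F x) = x * σ x := by
  have := IsGalois.of_finrank_le_two hL hσ
  rw [Algebra.norm_eq_prod_automorphisms, Finset.prod_eq_mul 1 σ hσ.symm]
  · rfl
  · rintro τ - ⟨hτ1, hτσ⟩
    exact absurd (AlgEquiv.eq_of_ne_one_of_finrank_le_two hL hσ hτ1) hτσ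
  all_goals simp

end Quadratic

theorem IntermediateField.finrank_adjoin_simple_le_two {F E : Type*} [Field F] [Field E]
    [Algebra F E] {x : E} {a : F} (hx : x ^ 2 = algebraMap F E a) : finrank F F⟮x⟯ ≤ 2 := by
  have hroot : aeval x (X ^ 2 - C a) = 0 := by simp [hx]
  have hmonic : (X ^ 2 - C a).Monic := monic_X_pow_sub_C a two_ne_zero
  rw [adjoin.finrank ⟨_, hmonic, hroot⟩, ← natDegree_X_pow_sub_C (n := 2) (r := a)]
  exact natDegree_le_of_dvd (minpoly.dvd F x hroot) hmonic.ne_zero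

-- `max d 0` because `Real.sqrt` sends negative numbers to `0`.
theorem finrank_adjoin_sqrt_intCast_le_two (d : ℤ) : finrank ℚ ℚ⟮Real.sqrt (d : ℝ)⟯ ≤ 2 :=
  finrank_adjoin_simple_le_two (a := max (d : ℚ) 0) <| by
    rw [Real.sq_sqrt', eq_ratCast]
    push_cast
    rfl

theorem NumberField.RingOfIntegers.intCast_norm_eq_mul {K : Type*} [Field K] [NumberField K]
    (hK : finrank ℚ K ≤ 2) {σ : Gal(K/ℚ)} (hσ : σ ≠ 1) (x : 𝓞 K) :
    ((Algebra.norm ℤ x : ℤ) : K) = x * σ x := by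
  rw [← Algebra.norm_eq_mul_of_finrank_le_two hK hσ, ← Algebra.coe_norm_int, eq_ratCast,
    Rat.cast_intCast]

theorem ramified_primes_dividing_m_strictly_principal_general
    (d : ℤ)
    (K : IntermediateField ℚ ℝ) (hK : K = ℚ⟮(Real.sqrt (d : ℝ))⟯) [NumberField K]
    (σ : K ≃ₐ[ℚ] K) (hσ : σ ≠ AlgEquiv.refl)
    (ε : (𝓞 K)ˣ)
    (α : 𝓞 K)
    (htotpos : ∀ φ : K →+* ℝ, 0 < φ (α : K))
    (hHilbert90 : ((ε : 𝓞 K) : K) * (α : K) = σ (α : K))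
    (m : ℤ) (hm : Algebra.norm ℤ α = m)
    (J : Ideal (𝓞 K)) (hJ : J ^ 2 = Ideal.span {(m : 𝓞 K)}) :
    ∃ β : 𝓞 K, J = Ideal.span {β} ∧ ∀ φ : K →+* ℝ, 0 < φ (β : K) := by
  have hrank : finrank ℚ K ≤ 2 := hK ▸ finrank_adjoin_sqrt_intCast_le_two d
  have hmα : (m : 𝓞 K) = α * (ε * α) := RingOfIntegers.coe_injective <| by
    push_cast
    rw [map_intCast, ← hm, RingOfIntegers.intCast_norm_eq_mul hrank hσ, ← hHilbert90]
  have hαsq : Ideal.span {α} ^ 2 = Ideal.span {(m : 𝓞 K)} := by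
    rw [hmα, mul_left_comm, Ideal.span_singleton_mul_left_unit ε.isUnit, sq,
      Ideal.span_singleton_mul_span_singleton]
  -- The ideal monoid of a Dedekind domain is torsion-free, by unique factorization.
  exact ⟨α, pow_left_injective two_ne_zero (hJ.trans hαsq.symm), htotpos⟩

/-- Let `k = ℚ(√d)` have fundamental unit `ε` of norm `+1` and let `α` be the totally
positive integer with `ε = σ(α)/α` and `m = Norm(α)` squarefree dividing the discriminant.
Then the product of the classes of the ramified primes dividing `m` (i.e. the class of the
ideal `J` with `J² = (m)`) is trivial in the strict class group of `k`: such a `J` is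
principal with a totally positive generator. -/
theorem ramified_primes_dividing_m_strictly_principal
    (d : ℤ) (hd1 : 1 < d) (hdsf : Squarefree d)
    (K : IntermediateField ℚ ℝ) (hK : K = ℚ⟮(Real.sqrt (d : ℝ))⟯) [NumberField K]
    (σ : K ≃ₐ[ℚ] K) (hσ : σ ≠ AlgEquiv.refl)
    (ε : (𝓞 K)ˣ)
    (hfund : ∀ u : (𝓞 K)ˣ, ∃ n : ℤ, u = ε ^ n ∨ u = -ε ^ n)
    (hnorm : Algebra.norm ℤ (ε : 𝓞 K) = 1)
    (α : 𝓞 K)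
    (htotpos : ∀ φ : K →+* ℝ, 0 < φ (α : K))
    (hHilbert90 : ((ε : 𝓞 K) : K) * (α : K) = σ (α : K))
    (m : ℤ) (hm : Algebra.norm ℤ α = m) (hmsf : Squarefree m)
    (hmD : m ∣ NumberField.discr K)
    (J : Ideal (𝓞 K)) (hJ : J ^ 2 = Ideal.span {(m : 𝓞 K)}) :
    ∃ β : 𝓞 K, J = Ideal.span {β} ∧ ∀ φ : K →+* ℝ, 0 < φ (β : K) :=
  ramified_primes_dividing_m_strictly_principal_general d K hK σ hσ ε α htotpos hHilbert90 m hm J hJ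
end
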